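/- arXiv:math/0105183 — 6 statements merged into one kernel-verified Lean document; each statement's English description precedes it below -/
import Mathlib

section
/- Let H be a (real or complex) inner product space and let v_1, ..., v_n be a finite sequence of vectors in H with v_1 + ... + v_n = 0. Then there is a permutation σ of {1, ..., n} such that, writing u_i = v_{σ(i)} and w_i = u_1 + ... + u_i, one has Re⟨u_{i+1}, w_i⟩ ≤ 0 for all 1 ≤ i ≤ n−1. -/
open scoped InnerProductSpace

private lemma aux_greedy
    {𝕜 H : Type*} [RCLike 𝕜] [NormedAddCommGroup H] [InnerProductSpace 𝕜 H]
    {n : ℕ} (v : Fin n → H) :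
    ∀ (m : ℕ) (s : Finset (Fin n)), s.card = m → ∀ w : H, ∑ j ∈ s, v j = -w →
      ∃ L : List (Fin n), L.Nodup ∧ L.toFinset = s ∧
        ∀ (i : ℕ) (h : i < L.length),
          RCLike.re (⟪v (L.get ⟨i, h⟩), w + ((L.take i).map v).sum⟫_𝕜) ≤ 0 := by
  intro m
  induction m with
  | zero =>
    intro s hs w hw
    refine ⟨[], by simp, (Finset.card_eq_zero.mp hs).symm ▸ rfl, ?_⟩
    intro i h; simp at h
  | succ m ih =>
    intro s hs w hw
    -- find j ∈ s with re ⟪v j, w⟫ ≤ 0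
    have hsne : s.Nonempty := Finset.card_pos.mp (by omega)
    have hex : ∃ j ∈ s, RCLike.re (⟪v j, w⟫_𝕜) ≤ 0 := by
      by_contra hcon
      push_neg at hcon
      have hpos : 0 < ∑ j ∈ s, RCLike.re (⟪v j, w⟫_𝕜) :=
        Finset.sum_pos hcon hsne
      have : ∑ j ∈ s, RCLike.re (⟪v j, w⟫_𝕜)
          = RCLike.re (⟪∑ j ∈ s, v j, w⟫_𝕜) := by
        rw [sum_inner]; simp [map_sum]
      rw [this, hw, inner_neg_left] at hpos
      have h2 : RCLike.re (⟪w, w⟫_𝕜) = ‖w‖ ^ 2 := by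
        rw [inner_self_eq_norm_sq]
      simp [h2] at hpos
      nlinarith [sq_nonneg ‖w‖]
    obtain ⟨j, hj, hjle⟩ := hex
    have hcard : (s.erase j).card = m := by
      rw [Finset.card_erase_of_mem hj, hs]; omega
    have hsum' : ∑ k ∈ s.erase j, v k = -(w + v j) := by
      have h1 : v j + ∑ k ∈ s.erase j, v k = -w := by
        rw [Finset.add_sum_erase s v hj, hw]
      have h2 : ∑ k ∈ s.erase j, v k = -w - v j := by
        rw [eq_sub_iff_add_eq, add_comm]; exact h1
      rw [h2]; abel
    obtain ⟨L', hnd, htf, hcond⟩ := ih (s.erase j) hcard (w + v j) hsum'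
    refine ⟨j :: L', ?_, ?_, ?_⟩
    · refine List.nodup_cons.mpr ⟨?_, hnd⟩
      intro hmem
      have : j ∈ s.erase j := htf ▸ List.mem_toFinset.mpr hmem
      exact (Finset.notMem_erase j s) this
    · rw [List.toFinset_cons, htf, Finset.insert_erase hj]
    · intro i h
      cases i with
      | zero => simpa using hjle
      | succ k =>
        have hk : k < L'.length := by simpa using h
        have := hcond k hk
        simpa [List.take_succ_cons, add_assoc] using this

private lemma take_map_sum {α H : Type*} [AddCommMonoid H] (v : α → H)
    (L : List α) : ∀ (m : ℕ), m ≤ L.length →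
    ((L.take m).map v).sum
      = ∑ j ∈ Finset.univ.filter (fun j : Fin L.length => (j : ℕ) < m), v (L.get j) := by
  intro m
  induction m with
  | zero => intro _; simp
  | succ m ih =>
    intro hm
    have hm' : m < L.length := hm
    have hset : Finset.univ.filter (fun j : Fin L.length => (j : ℕ) < m + 1)
        = insert (⟨m, hm'⟩ : Fin L.length)
            (Finset.univ.filter (fun j : Fin L.length => (j : ℕ) < m)) := by
      ext j
      simp [Fin.ext_iff]
      omega
    rw [hset, Finset.sum_insert (by simp), List.take_succ,
      List.getElem?_eq_getElem hm', List.map_append, List.sum_append,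
      ih (le_of_lt hm')]
    simp [add_comm]

/-- Lemma 3 of Weaver's paper: a finite family of vectors summing to zero can be
rearranged so that each new vector has nonpositive real inner product with the
partial sum of the preceding ones.  (Indices are `0, ..., n-1`; position `i+1`
plays the role of position `i+1` in the 1-indexed statement.) -/
theorem exists_rearrangement_nonpos_inner
    {𝕜 H : Type*} [RCLike 𝕜] [NormedAddCommGroup H] [InnerProductSpace 𝕜 H]
    (n : ℕ) (v : Fin n → H) (hsum : ∑ i, v i = 0) :
    ∃ σ : Equiv.Perm (Fin n), ∀ (i : ℕ) (h : i + 1 < n),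
      RCLike.re (⟪v (σ ⟨i + 1, h⟩),
        ∑ j ∈ Finset.univ.filter (fun j : Fin n => (j : ℕ) ≤ i), v (σ j)⟫_𝕜) ≤ 0 := by
  obtain ⟨L, hnd, htf, hcond⟩ := aux_greedy (𝕜 := 𝕜) v n Finset.univ (by simp) 0 (by simpa using hsum)
  have hlen : L.length = n := by
    have := List.toFinset_card_of_nodup hnd
    rw [htf] at this
    simpa using this.symm
  have hinj : Function.Injective (fun i : Fin n => L.get (Fin.cast hlen.symm i)) := by
    intro a b hab
    have := (List.Nodup.get_inj_iff hnd).mp hab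
    exact Fin.cast_injective hlen.symm (by exact this)
  let e : Equiv.Perm (Fin n) :=
    Equiv.ofBijective _ ((Fintype.bijective_iff_injective_and_card _).mpr ⟨hinj, rfl⟩)
  refine ⟨e, ?_⟩
  intro i h
  have hi1 : i + 1 < L.length := by omega
  have key := hcond (i + 1) hi1
  have hsum_eq : ∑ j ∈ Finset.univ.filter (fun j : Fin n => (j : ℕ) ≤ i), v (e j)
      = ((L.take (i + 1)).map v).sum := by
    rw [take_map_sum v L (i + 1) hi1.le]
    refine Finset.sum_nbij' (fun j => Fin.cast hlen.symm j) (fun j => Fin.cast hlen j)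
      ?_ ?_ ?_ ?_ ?_
    · intro a ha; simp at ha ⊢; omega
    · intro a ha; simp at ha ⊢; omega
    · intro a _; simp
    · intro a _; simp
    · intro a _; simp [e, Equiv.ofBijective_apply]
  have he : e ⟨i + 1, h⟩ = L.get ⟨i + 1, hi1⟩ := rfl
  rw [he, hsum_eq]
  simpa using key
end

section
/- Let H be a (real or complex) inner product space and let v_1, ..., v_n be a finite sequence of vectors in H with v_1 + ... + v_n = 0. Then there is a permutation σ of {1, ..., n} such that for every 1 ≤ k ≤ n, ‖v_{σ(1)} + ... + v_{σ(k)}‖² ≤ ‖v_{σ(1)}‖² + ... + ‖v_{σ(k)}‖². -/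
open RCLike Finset

private lemma snoc_filter_sum {n k : ℕ} {M : Type*} [AddCommMonoid M]
    (f : Fin k → Fin n) (i₀ : Fin n) (g : Fin n → M) (m : ℕ) (hm : m ≤ k) :
    ∑ j ∈ Finset.univ.filter (fun j : Fin (k+1) => (j : ℕ) < m),
        g ((Fin.snoc f i₀ : Fin (k+1) → Fin n) j)
      = ∑ j ∈ Finset.univ.filter (fun j : Fin k => (j : ℕ) < m), g (f j) := by
  rw [Finset.sum_filter, Finset.sum_filter, Fin.sum_univ_castSucc]
  have hlast : ¬ ((Fin.last k : Fin (k+1)) : ℕ) < m := by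
    simp only [Fin.val_last]; omega
  rw [if_neg hlast, add_zero]
  refine Finset.sum_congr rfl fun j _ => ?_
  simp [Fin.snoc_castSucc]

/-- Combination of Lemmas 2 and 3 of Weaver's paper: a finite family of vectors
summing to zero can be rearranged so that every partial sum has norm-squared
bounded by the sum of the norms-squared of its terms.  The first `k` vectors of
the rearrangement are `v (σ j)` for `(j : ℕ) < k`. -/
theorem exists_rearrangement_partial_sums_bounded
    {𝕜 H : Type*} [RCLike 𝕜] [NormedAddCommGroup H] [InnerProductSpace 𝕜 H]
    (n : ℕ) (v : Fin n → H) (hsum : ∑ i, v i = 0) :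
    ∃ σ : Equiv.Perm (Fin n), ∀ k, 1 ≤ k → k ≤ n →
      ‖∑ j ∈ Finset.univ.filter (fun j : Fin n => (j : ℕ) < k), v (σ j)‖ ^ 2 ≤
        ∑ j ∈ Finset.univ.filter (fun j : Fin n => (j : ℕ) < k), ‖v (σ j)‖ ^ 2 := by
  have key : ∀ k, k ≤ n → ∃ f : Fin k → Fin n, Function.Injective f ∧
      ∀ m, m ≤ k →
        ‖∑ j ∈ Finset.univ.filter (fun j : Fin k => (j : ℕ) < m), v (f j)‖ ^ 2 ≤
          ∑ j ∈ Finset.univ.filter (fun j : Fin k => (j : ℕ) < m), ‖v (f j)‖ ^ 2 := by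
    intro k
    induction k with
    | zero =>
      intro _
      refine ⟨Fin.elim0, fun a => a.elim0, ?_⟩
      intro m _
      simp
    | succ k ih =>
      intro hk
      obtain ⟨f, hf, hP⟩ := ih (Nat.le_of_succ_le hk)
      set S : H := ∑ j, v (f j) with hS
      set t : Finset (Fin n) := (Finset.univ.image f)ᶜ with ht
      have himgcard : (Finset.univ.image f).card = k := by
        rw [Finset.card_image_of_injective _ hf, Finset.card_univ, Fintype.card_fin]
      have htne : t.Nonempty := by
        refine Finset.card_pos.mp ?_
        have : t.card = n - k := by
          rw [ht, Finset.card_compl, Fintype.card_fin, himgcard]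
        omega
      have hsum_img : ∑ i ∈ Finset.univ.image f, v i = S := by
        rw [Finset.sum_image (fun a _ b _ h => hf h)]
      have hsum_t : ∑ i ∈ t, v i = -S := by
        have h := Finset.sum_add_sum_compl (Finset.univ.image f) v
        rw [hsum_img, hsum] at h
        rw [ht]
        exact eq_neg_of_add_eq_zero_right h
      have hex : ∃ i ∈ t, re (inner (𝕜 := 𝕜) S (v i)) ≤ 0 := by
        by_contra hcon
        push_neg at hcon
        have hpos : 0 < ∑ i ∈ t, re (inner (𝕜 := 𝕜) S (v i)) :=
          Finset.sum_pos (fun i hi => hcon i hi) htne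
        have heq : ∑ i ∈ t, re (inner (𝕜 := 𝕜) S (v i)) = -‖S‖ ^ 2 := by
          rw [← map_sum, ← inner_sum, hsum_t, inner_neg_right, map_neg,
            inner_self_eq_norm_sq]
        rw [heq] at hpos
        have : (0:ℝ) ≤ ‖S‖ ^ 2 := sq_nonneg _
        linarith
      obtain ⟨i₀, hi₀t, hi₀⟩ := hex
      have hi₀not : i₀ ∉ Finset.univ.image f := by
        rw [ht] at hi₀t
        simpa using hi₀t
      refine ⟨Fin.snoc f i₀, ?_, ?_⟩
      · -- injectivity
        intro a b hab
        rcases Fin.eq_castSucc_or_eq_last a with ⟨a', rfl⟩ | rfl <;>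
          rcases Fin.eq_castSucc_or_eq_last b with ⟨b', rfl⟩ | rfl
        · rw [Fin.snoc_castSucc, Fin.snoc_castSucc] at hab
          exact congrArg Fin.castSucc (hf hab)
        · rw [Fin.snoc_castSucc, Fin.snoc_last] at hab
          exact absurd (hab ▸ Finset.mem_image_of_mem f (Finset.mem_univ a')) hi₀not
        · rw [Fin.snoc_last, Fin.snoc_castSucc] at hab
          exact absurd (hab ▸ Finset.mem_image_of_mem f (Finset.mem_univ b')) hi₀not
        · rfl
      · -- the bound
        intro m hm
        rcases Nat.lt_or_ge m (k+1) with hmk | hmk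
        · have hm' : m ≤ k := Nat.lt_succ_iff.mp hmk
          rw [snoc_filter_sum f i₀ v m hm', snoc_filter_sum f i₀ (fun i => ‖v i‖^2) m hm']
          exact hP m hm'
        · have hm' : m = k + 1 := le_antisymm hm hmk
          subst hm'
          have hfull : (Finset.univ.filter (fun j : Fin (k+1) => (j : ℕ) < k+1))
              = Finset.univ := by
            refine Finset.filter_true_of_mem fun j _ => j.isLt
          rw [hfull]
          have hfullk : (Finset.univ.filter (fun j : Fin k => (j : ℕ) < k))
              = Finset.univ := by
            refine Finset.filter_true_of_mem fun j _ => j.isLt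
          have hPk := hP k le_rfl
          rw [hfullk] at hPk
          rw [Fin.sum_univ_castSucc (f := fun j : Fin (k+1) => v ((Fin.snoc f i₀ : Fin (k+1) → Fin n) j)),
            Fin.sum_univ_castSucc (f := fun j : Fin (k+1) => ‖v ((Fin.snoc f i₀ : Fin (k+1) → Fin n) j)‖^2)]
          simp only [Fin.snoc_castSucc, Fin.snoc_last]
          have hexp := norm_add_sq (𝕜 := 𝕜) S (v i₀)
          rw [← hS] at hPk ⊢
          rw [hexp]
          nlinarith [hi₀, hPk]
  obtain ⟨f, hf, hP⟩ := key n le_rfl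
  refine ⟨Equiv.ofBijective f ((Finite.injective_iff_bijective).mp hf), ?_⟩
  intro k _ hk
  simpa [Equiv.ofBijective_apply] using hP k hk
end

section
/- Let p ∈ M_n(ℂ) be an orthogonal projection (p = p* = p²) acting on ℂⁿ with its standard inner product, and let δ_p = max{⟨p e_i, e_i⟩ : 1 ≤ i ≤ n}, where (e_i) is the standard orthonormal basis of ℂⁿ. Then for any unit vector v ∈ ℂⁿ there exists a symmetry s (a self-adjoint unitary matrix) that is diagonal with respect to the standard basis, such that ‖p s p (v)‖ ≤ √(2δ_p + 3δ_p²). -/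
/-- Random signs lemma: there is a choice of signs `ε i = ±1` such that
`‖∑ εᵢ • fᵢ‖² ≤ ∑ ‖fᵢ‖²`, by the parallelogram law and induction. -/
lemma exists_signs_norm_sum_sq_le {E : Type*} [NormedAddCommGroup E]
    [InnerProductSpace ℂ E] {ι : Type*} [DecidableEq ι] (f : ι → E) (t : Finset ι) :
    ∃ ε : ι → ℂ, (∀ i, ε i = 1 ∨ ε i = -1) ∧
      ‖∑ i ∈ t, ε i • f i‖ ^ 2 ≤ ∑ i ∈ t, ‖f i‖ ^ 2 := by
  induction t using Finset.induction_on with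
  | empty => exact ⟨fun _ => 1, fun _ => Or.inl rfl, by simp⟩
  | @insert a t ha ih =>
    obtain ⟨ε, hε, hle⟩ := ih
    set S := ∑ i ∈ t, ε i • f i with hS
    have hpar := parallelogram_law_with_norm ℂ (f a) S
    have hSnonneg : (0:ℝ) ≤ ∑ i ∈ t, ‖f i‖ ^ 2 :=
      Finset.sum_nonneg fun i _ => sq_nonneg _
    rcases le_total ‖f a + S‖ ‖f a - S‖ with hc | hc
    · refine ⟨Function.update ε a 1, ?_, ?_⟩
      · intro i
        rcases eq_or_ne i a with rfl | hne
        · simp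
        · simpa [Function.update_of_ne hne] using hε i
      · have hsum : ∑ i ∈ insert a t, (Function.update ε a 1) i • f i = f a + S := by
          rw [Finset.sum_insert ha, Function.update_self, one_smul]
          congr 1
          exact Finset.sum_congr rfl fun i hi => by
            rw [Function.update_of_ne (ne_of_mem_of_not_mem hi ha)]
        rw [hsum, Finset.sum_insert ha]
        have h1 : ‖f a + S‖ ^ 2 ≤ ‖f a‖ ^ 2 + ‖S‖ ^ 2 := by
          nlinarith [norm_nonneg (f a + S), norm_nonneg (f a - S)]
        nlinarith
    · refine ⟨Function.update ε a (-1), ?_, ?_⟩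
      · intro i
        rcases eq_or_ne i a with rfl | hne
        · simp
        · simpa [Function.update_of_ne hne] using hε i
      · have hsum : ∑ i ∈ insert a t, (Function.update ε a (-1)) i • f i
            = -(f a - S) := by
          rw [Finset.sum_insert ha, Function.update_self]
          have : ∑ i ∈ t, (Function.update ε a (-1)) i • f i = S :=
            Finset.sum_congr rfl fun i hi => by
              rw [Function.update_of_ne (ne_of_mem_of_not_mem hi ha)]
          rw [this]
          module
        rw [hsum, norm_neg, Finset.sum_insert ha]
        have h1 : ‖f a - S‖ ^ 2 ≤ ‖f a‖ ^ 2 + ‖S‖ ^ 2 := by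
          nlinarith [norm_nonneg (f a + S), norm_nonneg (f a - S)]
        nlinarith

/-- Theorem 1 of Weaver's paper: for an orthogonal projection `p ∈ Mₙ(ℂ)` with
diagonal bound `δ_p = max ⟨p eᵢ, eᵢ⟩` and any unit vector `v ∈ ℂⁿ`, there is a
diagonal symmetry `s` (a self-adjoint unitary diagonal matrix) with
`‖psp(v)‖ ≤ √(2δ_p + 3δ_p²)`. -/
theorem exists_diagonal_symmetry_psp_vector_bound
    (n : ℕ) (p : Matrix (Fin n) (Fin n) ℂ)
    (hp_sa : p.IsHermitian) (hp_idem : p * p = p)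
    (δ : ℝ) (hδ : IsGreatest (Set.range fun i : Fin n => (p i i).re) δ)
    (v : EuclideanSpace ℂ (Fin n)) (hv : ‖v‖ = 1) :
    ∃ s : Matrix (Fin n) (Fin n) ℂ, s.IsHermitian ∧ s * s = 1 ∧ s.IsDiag ∧
      ‖Matrix.toEuclideanCLM (𝕜 := ℂ) (p * s * p) v‖ ≤
        Real.sqrt (2 * δ + 3 * δ ^ 2) := by
  classical
  -- diagonal entries of `p` via columns
  have hdiag : ∀ i, (p i i).re = ∑ k, ‖p k i‖ ^ 2 := by
    intro i
    have h1 : p i i = ∑ k, (starRingEnd ℂ) (p k i) * p k i := by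
      conv_lhs => rw [← hp_idem]
      rw [Matrix.mul_apply]
      refine Finset.sum_congr rfl fun k _ => ?_
      congr 1
      have := congrFun (congrFun hp_sa.symm i) k
      simpa [Matrix.conjTranspose_apply] using this
    rw [h1]
    rw [Complex.re_sum]
    refine Finset.sum_congr rfl fun k _ => ?_
    rw [Complex.conj_mul']
    simp [Complex.sq_norm, Complex.normSq_eq_norm_sq, sq]
  have hdiag_nonneg : ∀ i, (0:ℝ) ≤ (p i i).re := fun i => by
    rw [hdiag i]; exact Finset.sum_nonneg fun k _ => sq_nonneg _
  obtain ⟨j, hj⟩ := hδ.1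
  have hδ0 : 0 ≤ δ := hj ▸ hdiag_nonneg j
  -- `w` is `p v` in coordinates
  set w : Fin n → ℂ := p.mulVec v with hw
  -- ‖p v‖ ≤ 1
  set P := Matrix.toEuclideanCLM (𝕜 := ℂ) p with hP
  have hPsa : IsSelfAdjoint P := by
    show star P = P
    rw [hP, ← map_star]
    exact congrArg _ hp_sa
  have hPP : P (P v) = P v := by
    have : P * P = P := by rw [hP, ← map_mul, hp_idem]
    calc P (P v) = (P * P) v := rfl
    _ = P v := by rw [this]
  have hPv_le : ‖P v‖ ≤ 1 := by
    have h1 : (inner ℂ (P v) (P v) : ℂ) = inner ℂ v (P v) := by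
      rw [ContinuousLinearMap.isSelfAdjoint_iff'] at hPsa
      calc (inner ℂ (P v) (P v) : ℂ)
          = inner ℂ ((ContinuousLinearMap.adjoint P) (P v)) v := by
            rw [ContinuousLinearMap.adjoint_inner_left]
        _ = inner ℂ (P (P v)) v := by rw [hPsa]
        _ = inner ℂ (P v) v := by rw [hPP]
        _ = inner ℂ v (P v) := by
            rw [← ContinuousLinearMap.adjoint_inner_left, hPsa]
    have h2 : ‖P v‖ ^ 2 = RCLike.re (inner ℂ v (P v) : ℂ) := by
      rw [← inner_self_eq_norm_sq (𝕜 := ℂ), h1]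
    have h3 : RCLike.re (inner ℂ v (P v) : ℂ) ≤ ‖v‖ * ‖P v‖ := by
      calc RCLike.re (inner ℂ v (P v) : ℂ) ≤ ‖(inner ℂ v (P v) : ℂ)‖ :=
            RCLike.re_le_norm _
      _ ≤ ‖v‖ * ‖P v‖ := norm_inner_le_norm _ _
    nlinarith [norm_nonneg (P v), h2, h3, hv]
  -- coordinates of `P v` are `w`
  have hPvw : ∀ k, P v k = w k := fun k => rfl
  have hwsum : ∑ i, ‖w i‖ ^ 2 ≤ 1 := by
    have : ‖P v‖ ^ 2 = ∑ i, ‖P v i‖ ^ 2 := by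
      rw [EuclideanSpace.norm_eq, Real.sq_sqrt (Finset.sum_nonneg fun i _ => sq_nonneg _)]
    have h2 : ∑ i, ‖w i‖ ^ 2 = ‖P v‖ ^ 2 := by
      rw [this]
      exact Finset.sum_congr rfl fun i _ => by rw [hPvw]
    nlinarith [hPv_le, norm_nonneg (P v)]
  -- the column vectors
  set f : Fin n → EuclideanSpace ℂ (Fin n) :=
    fun i => (WithLp.equiv 2 (Fin n → ℂ)).symm (fun k => p k i * w i) with hf
  obtain ⟨ε, hε, hle⟩ := exists_signs_norm_sum_sq_le f Finset.univ
  refine ⟨Matrix.diagonal ε, ?_, ?_, Matrix.isDiag_diagonal ε, ?_⟩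
  · have hstar : star ε = ε := funext fun i => by
      rcases hε i with h | h <;> simp [h]
    rw [Matrix.IsHermitian, Matrix.diagonal_conjTranspose, hstar]
  · rw [Matrix.diagonal_mul_diagonal]
    have h1 : (fun i => ε i * ε i) = (1 : Fin n → ℂ) := funext fun i => by
      rcases hε i with h | h <;> simp [h]
    rw [h1]
    exact Matrix.diagonal_one
  · -- identify the vector with the signed sum
    have key : Matrix.toEuclideanCLM (𝕜 := ℂ) (p * Matrix.diagonal ε * p) v
        = ∑ i, ε i • f i := by
      apply (WithLp.equiv 2 (Fin n → ℂ)).injective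
      funext k
      have lhs : (WithLp.equiv 2 (Fin n → ℂ))
          (Matrix.toEuclideanCLM (𝕜 := ℂ) (p * Matrix.diagonal ε * p) v) k
          = (p * Matrix.diagonal ε * p).mulVec (WithLp.equiv 2 (Fin n → ℂ) v) k := by
        rfl
      rw [lhs]
      have : (p * Matrix.diagonal ε * p).mulVec (WithLp.equiv 2 (Fin n → ℂ) v)
          = p.mulVec ((Matrix.diagonal ε).mulVec w) := by
        rw [← Matrix.mulVec_mulVec, ← Matrix.mulVec_mulVec]
        rfl
      rw [this]
      have hdmv : (Matrix.diagonal ε).mulVec w = fun i => ε i * w i := by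
        funext i; exact Matrix.mulVec_diagonal ε w i
      rw [hdmv]
      show ∑ i, p k i * (ε i * w i) = (∑ i, ε i • f i) k
      have : (∑ i, ε i • f i) k = ∑ i, ε i * (p k i * w i) := by
        rw [WithLp.ofLp_sum, Finset.sum_apply]
        rfl
      rw [this]
      exact Finset.sum_congr rfl fun i _ => by ring
    rw [key]
    -- bound the sum of squared norms
    have hfi : ∀ i, ‖f i‖ ^ 2 = ‖w i‖ ^ 2 * (p i i).re := by
      intro i
      rw [EuclideanSpace.norm_eq, Real.sq_sqrt (Finset.sum_nonneg fun k _ => sq_nonneg _)]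
      rw [hdiag i, Finset.mul_sum]
      refine Finset.sum_congr rfl fun k _ => ?_
      show ‖p k i * w i‖ ^ 2 = ‖w i‖ ^ 2 * ‖p k i‖ ^ 2
      rw [norm_mul]; ring
    have hsum_le : ∑ i, ‖f i‖ ^ 2 ≤ δ := by
      calc ∑ i, ‖f i‖ ^ 2 = ∑ i, ‖w i‖ ^ 2 * (p i i).re := by
            exact Finset.sum_congr rfl fun i _ => hfi i
        _ ≤ ∑ i, ‖w i‖ ^ 2 * δ := by
            refine Finset.sum_le_sum fun i _ => ?_
            exact mul_le_mul_of_nonneg_left (hδ.2 ⟨i, rfl⟩) (sq_nonneg _)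
        _ = (∑ i, ‖w i‖ ^ 2) * δ := by rw [← Finset.sum_mul]
        _ ≤ 1 * δ := mul_le_mul_of_nonneg_right hwsum hδ0
        _ = δ := one_mul δ
    have hfin : ‖∑ i, ε i • f i‖ ^ 2 ≤ 2 * δ + 3 * δ ^ 2 := by
      have : δ ≤ 2 * δ + 3 * δ ^ 2 := by nlinarith
      calc ‖∑ i, ε i • f i‖ ^ 2 ≤ ∑ i, ‖f i‖ ^ 2 := hle
        _ ≤ δ := hsum_le
        _ ≤ 2 * δ + 3 * δ ^ 2 := this
    have h0 : (0:ℝ) ≤ 2 * δ + 3 * δ ^ 2 := by nlinarith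
    rw [show (2 * δ + 3 * δ ^ 2) = ‖∑ i, ε i • f i‖ ^ 2 + (2 * δ + 3 * δ ^ 2 - ‖∑ i, ε i • f i‖ ^ 2) by ring]
    calc ‖∑ i, ε i • f i‖ ≤ Real.sqrt (‖∑ i, ε i • f i‖ ^ 2) := by
          rw [Real.sqrt_sq (norm_nonneg _)]
      _ ≤ _ := Real.sqrt_le_sqrt (by nlinarith)
end

section
/- Let m ≥ 6, let H = ℂ^N with N = 2m³ + 8m² + 7m + 2, and index the standard orthonormal basis of H by four families a_i (1 ≤ i ≤ m²), b_i (1 ≤ i ≤ 2m+1), c_{ij} (1 ≤ i < j ≤ 2m+1), d_{ij} (1 ≤ i ≤ 2m+1, 1 ≤ j ≤ (m+1)²). Define v_0 = Σ_{i=1}^{m²} (1/(m+1)) a_i + Σ_{i=1}^{2m+1} (1/(m+1)) b_i, and for 1 ≤ i ≤ 2m+1, v_i = Σ_{j=1}^{m²} (−1/(m²(m+1))) a_j + (1/(m+1)) b_i + Σ_{j=1}^{i−1} (1/(m(m+1))) c_{ji} + Σ_{j=i+1}^{2m+1} (−1/(m(m+1))) c_{ij} + Σ_{j=1}^{(m+1)²}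 (1/m)√((m−1)/(m+1)) d_{ij}. Then the family {v_0, v_1, ..., v_{2m+1}} is orthonormal in H. -/
/-- Index set for the standard orthonormal basis of Weaver's counterexample:
`a`-indices `Fin (m²)`, `b`-indices `Fin (2m+1)`, `c`-indices the pairs
`(i, j)` with `i < j` in `Fin (2m+1)`, and `d`-indices
`Fin (2m+1) × Fin ((m+1)²)`.  Its cardinality is `2m³ + 8m² + 7m + 2`. -/
abbrev WeaverIdx (m : ℕ) :=
  Fin (m ^ 2) ⊕ (Fin (2 * m + 1) ⊕
    ({q : Fin (2 * m + 1) × Fin (2 * m + 1) // q.1 < q.2} ⊕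
      (Fin (2 * m + 1) × Fin ((m + 1) ^ 2))))

/-- The Hilbert space `H = ℂ^N`, `N = 2m³ + 8m² + 7m + 2`, with its standard
basis indexed by `WeaverIdx m`. -/
abbrev WeaverH (m : ℕ) := EuclideanSpace ℂ (WeaverIdx m)

/-- The vector `v₀ = Σᵢ (1/(m+1)) aᵢ + Σᵢ (1/(m+1)) bᵢ`. -/
noncomputable def weaverV0 (m : ℕ) : WeaverH m := WithLp.toLp 2 fun (x : WeaverIdx m) =>
  match x with
  | Sum.inl _ => 1 / ((m : ℂ) + 1)
  | Sum.inr (Sum.inl _) => 1 / ((m : ℂ) + 1)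
  | Sum.inr (Sum.inr _) => 0

/-- The vector
`vᵢ = Σⱼ (−1/(m²(m+1))) aⱼ + (1/(m+1)) bᵢ + Σ_{j<i} (1/(m(m+1))) c_{ji}
  + Σ_{j>i} (−1/(m(m+1))) c_{ij} + Σⱼ (1/m)√((m−1)/(m+1)) d_{ij}`,
for `i` ranging over `Fin (2m+1)`. -/
noncomputable def weaverV (m : ℕ) (i : Fin (2 * m + 1)) : WeaverH m := WithLp.toLp 2 fun (x : WeaverIdx m) =>
  match x with
  | Sum.inl _ => -1 / ((m : ℂ) ^ 2 * ((m : ℂ) + 1))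
  | Sum.inr (Sum.inl k) => if k = i then 1 / ((m : ℂ) + 1) else 0
  | Sum.inr (Sum.inr (Sum.inl q)) =>
      if q.1.2 = i then 1 / ((m : ℂ) * ((m : ℂ) + 1))
      else if q.1.1 = i then -1 / ((m : ℂ) * ((m : ℂ) + 1)) else 0
  | Sum.inr (Sum.inr (Sum.inr q)) =>
      if q.1 = i then (1 / (m : ℂ)) * (Real.sqrt (((m : ℝ) - 1) / ((m : ℝ) + 1)) : ℝ)
      else 0

/-- The family `v₀, v₁, ..., v_{2m+1}` of `2m+2` vectors. -/
noncomputable def weaverFam (m : ℕ) : Fin (2 * m + 1 + 1) → WeaverH m :=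
  Fin.cases (weaverV0 m) (weaverV m)

/-- The span of `v₀, v₁, ..., v_{2m+1}`, the range of the projection `p`. -/
noncomputable def weaverSpan (m : ℕ) : Submodule ℂ (WeaverH m) :=
  Submodule.span ℂ (Set.range (weaverFam m))

/-- The orthogonal projection `p` of `H` onto the span of `v₀, ..., v_{2m+1}`,
as a continuous linear endomorphism of `H`. -/
noncomputable def weaverP (m : ℕ) : WeaverH m →L[ℂ] WeaverH m :=
  (weaverSpan m).subtypeL.comp ((weaverSpan m).orthogonalProjection)


lemma wSum_lt_pairs {n : ℕ} (f : Fin n × Fin n → ℂ) :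
    ∑ q : {q : Fin n × Fin n // q.1 < q.2}, f q
      = ∑ x : Fin n, ∑ y : Fin n, if x < y then f (x, y) else 0 := by
  rw [← Fintype.sum_prod_type (f := fun q => if q.1 < q.2 then f q else 0)]
  rw [← Finset.sum_filter]
  exact (Finset.sum_subtype _ (by simp) f).symm

lemma wc_sum_diag {n : ℕ} (i : Fin n) (cc : ℂ) :
    ∑ q : {q : Fin n × Fin n // q.1 < q.2},
      (starRingEnd ℂ) (if q.1.2 = i then cc else if q.1.1 = i then -cc else 0)
        * (if q.1.2 = i then cc else if q.1.1 = i then -cc else 0)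
      = ((n - 1 : ℕ) : ℂ) * ((starRingEnd ℂ) cc * cc) := by
  rw [wSum_lt_pairs (f := fun p =>
    (starRingEnd ℂ) (if p.2 = i then cc else if p.1 = i then -cc else 0)
      * (if p.2 = i then cc else if p.1 = i then -cc else 0))]
  have key : ∀ x y : Fin n,
      (if x < y then (starRingEnd ℂ) (if y = i then cc else if x = i then -cc else 0)
          * (if y = i then cc else if x = i then -cc else 0) else 0)
      = (if y = i then (if x < i then (starRingEnd ℂ) cc * cc else 0) else 0)
        + (if x = i then (if i < y then (starRingEnd ℂ) cc * cc else 0) else 0) := by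
    intro x y
    split_ifs <;>
      first
        | (exfalso; simp only [Fin.lt_def, Fin.ext_iff] at *; omega)
        | simp [map_neg, neg_mul_neg]
  simp only [key, Finset.sum_add_distrib]
  have e1 : ∑ x : Fin n, ∑ y : Fin n,
      (if y = i then (if x < i then (starRingEnd ℂ) cc * cc else 0) else 0)
      = (i.val : ℂ) * ((starRingEnd ℂ) cc * cc) := by
    simp only [Finset.sum_ite_eq', Finset.mem_univ, if_true]
    rw [Finset.sum_ite, Finset.sum_const, Finset.sum_const_zero, add_zero]
    rw [show (Finset.univ.filter fun x : Fin n => x < i) = Finset.Iio i from by ext; simp,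
      Fin.card_Iio, nsmul_eq_mul]
  have e2 : ∑ x : Fin n, ∑ y : Fin n,
      (if x = i then (if i < y then (starRingEnd ℂ) cc * cc else 0) else 0)
      = ((n - 1 - i.val : ℕ) : ℂ) * ((starRingEnd ℂ) cc * cc) := by
    have h2 : ∀ x : Fin n, (∑ y : Fin n, if x = i then (if i < y then (starRingEnd ℂ) cc * cc else 0) else 0)
        = if x = i then ((n - 1 - i.val : ℕ) : ℂ) * ((starRingEnd ℂ) cc * cc) else 0 := by
      intro x
      by_cases h : x = i
      · simp only [h, if_true]
        rw [Finset.sum_ite, Finset.sum_const, Finset.sum_const_zero, add_zero]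
        rw [show (Finset.univ.filter fun y : Fin n => i < y) = Finset.Ioi i from by ext; simp,
          Fin.card_Ioi, nsmul_eq_mul]
      · simp [h]
    simp [h2, Finset.sum_ite_eq']
  rw [e1, e2, ← add_mul]
  congr 1
  have := i.isLt
  rw [← Nat.cast_add, show i.val + (n - 1 - i.val) = n - 1 from by omega]

lemma wc_sum_off {n : ℕ} {i j : Fin n} (hij : i < j) (cc : ℂ) :
    ∑ q : {q : Fin n × Fin n // q.1 < q.2},
      (starRingEnd ℂ) (if q.1.2 = i then cc else if q.1.1 = i then -cc else 0)
        * (if q.1.2 = j then cc else if q.1.1 = j then -cc else 0)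
      = -((starRingEnd ℂ) cc * cc) := by
  rw [wSum_lt_pairs (f := fun p =>
    (starRingEnd ℂ) (if p.2 = i then cc else if p.1 = i then -cc else 0)
      * (if p.2 = j then cc else if p.1 = j then -cc else 0))]
  have key : ∀ x y : Fin n,
      (if x < y then (starRingEnd ℂ) (if y = i then cc else if x = i then -cc else 0)
          * (if y = j then cc else if x = j then -cc else 0) else 0)
      = (if y = j then (if x = i then -((starRingEnd ℂ) cc * cc) else 0) else 0) := by
    intro x y
    have hij' := hij
    split_ifs <;>
      first
        | (exfalso; simp only [Fin.lt_def, Fin.ext_iff] at *; omega)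
        | simp [map_neg, neg_mul_neg]
  simp only [key]
  simp [Finset.sum_ite_eq']
lemma wb_sum_diag {n : ℕ} (i : Fin n) (cc : ℂ) :
    ∑ k : Fin n, (starRingEnd ℂ) (if k = i then cc else 0) * (if k = i then cc else 0)
      = (starRingEnd ℂ) cc * cc := by
  have h : ∀ k : Fin n, (starRingEnd ℂ) (if k = i then cc else 0) * (if k = i then cc else 0)
      = if k = i then (starRingEnd ℂ) cc * cc else 0 := by
    intro k; split_ifs <;> simp
  simp [h, Finset.sum_ite_eq']

lemma wb_sum_off {n : ℕ} {i j : Fin n} (hij : i ≠ j) (cc cc' : ℂ) :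
    ∑ k : Fin n, (starRingEnd ℂ) (if k = i then cc else 0) * (if k = j then cc' else 0)
      = 0 := by
  apply Finset.sum_eq_zero; intro k _
  split_ifs with h1 h2 <;> simp_all

lemma wd_sum_diag {n p : ℕ} (i : Fin n) (s : ℂ) :
    ∑ q : Fin n × Fin p, (starRingEnd ℂ) (if q.1 = i then s else 0) * (if q.1 = i then s else 0)
      = (p : ℂ) * ((starRingEnd ℂ) s * s) := by
  rw [Fintype.sum_prod_type]
  have h : ∀ x : Fin n, (starRingEnd ℂ) (if x = i then s else 0) * (if x = i then s else 0)
      = if x = i then (starRingEnd ℂ) s * s else 0 := by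
    intro x; split_ifs <;> simp
  simp [h, Finset.sum_ite_eq', mul_comm]

lemma wd_sum_off {n p : ℕ} {i j : Fin n} (hij : i ≠ j) (s : ℂ) :
    ∑ q : Fin n × Fin p, (starRingEnd ℂ) (if q.1 = i then s else 0) * (if q.1 = j then s else 0)
      = 0 := by
  apply Finset.sum_eq_zero; intro q _
  split_ifs with h1 h2 <;> simp_all

lemma wM1_ne (m : ℕ) : ((m : ℂ) + 1) ≠ 0 := Nat.cast_add_one_ne_zero m

lemma winner_v0_v0 (m : ℕ) (hm : 6 ≤ m) :
    (inner ℂ (weaverV0 m) (weaverV0 m) : ℂ) = 1 := by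
  simp only [PiLp.inner_apply, RCLike.inner_apply', Fintype.sum_sum_type, weaverV0]
  simp only [map_div₀, map_add, map_one, Complex.conj_natCast, map_zero, mul_zero,
    Finset.sum_const, Finset.card_univ, Fintype.card_fin, nsmul_eq_mul,
    Finset.sum_const_zero, add_zero, zero_mul]
  have h := wM1_ne m
  field_simp
  push_cast
  ring

lemma winner_v0_v (m : ℕ) (hm : 6 ≤ m) (i : Fin (2 * m + 1)) :
    (inner ℂ (weaverV0 m) (weaverV m i) : ℂ) = 0 := by
  have hM0 : ((m : ℂ)) ≠ 0 := Nat.cast_ne_zero.2 (by omega)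
  have hM1 := wM1_ne m
  simp only [PiLp.inner_apply, RCLike.inner_apply', Fintype.sum_sum_type, weaverV0, weaverV]
  simp only [map_zero, zero_mul, Finset.sum_const_zero, add_zero, mul_ite, mul_zero,
    Finset.sum_ite_eq', Finset.mem_univ, if_true, Finset.sum_const, Finset.card_univ,
    Fintype.card_fin, nsmul_eq_mul, ite_self]
  simp only [map_div₀, map_add, map_one, Complex.conj_natCast]
  field_simp
  push_cast
  ring

lemma winner_v_v_diag (m : ℕ) (hm : 6 ≤ m) (i : Fin (2 * m + 1)) :
    (inner ℂ (weaverV m i) (weaverV m i) : ℂ) = 1 := by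
  have hM0 : ((m : ℂ)) ≠ 0 := Nat.cast_ne_zero.2 (by omega)
  have hM1 := wM1_ne m
  have hm6 : (6 : ℝ) ≤ (m : ℝ) := by exact_mod_cast hm
  have ht : (0 : ℝ) ≤ ((m : ℝ) - 1) / ((m : ℝ) + 1) := by
    apply div_nonneg <;> linarith
  simp only [PiLp.inner_apply, RCLike.inner_apply', Fintype.sum_sum_type, weaverV, neg_div]
  rw [wb_sum_diag, wc_sum_diag, wd_sum_diag]
  have hS : (starRingEnd ℂ) ((1 / (m : ℂ)) * ((Real.sqrt (((m : ℝ) - 1) / ((m : ℝ) + 1)) : ℝ) : ℂ))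
      * ((1 / (m : ℂ)) * ((Real.sqrt (((m : ℝ) - 1) / ((m : ℝ) + 1)) : ℝ) : ℂ))
      = 1 / ((m : ℂ)) ^ 2 * (((((m : ℝ) - 1) / ((m : ℝ) + 1)) : ℝ) : ℂ) := by
    rw [map_mul, map_div₀, map_one, Complex.conj_natCast, Complex.conj_ofReal,
      mul_mul_mul_comm, ← Complex.ofReal_mul, Real.mul_self_sqrt ht]
    ring
  rw [hS]
  simp only [map_neg, map_div₀, map_add, map_one, map_mul, map_pow, Complex.conj_natCast,
    Finset.sum_const, Finset.card_univ, Fintype.card_fin, nsmul_eq_mul,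
    Nat.add_sub_cancel]
  push_cast
  field_simp
  have hD : ((m:ℂ) + 1) * ((m:ℂ) + 1) * ((m:ℂ) * ((m:ℂ) + 1) * ((m:ℂ) * ((m:ℂ) + 1))
      * ((m:ℂ) ^ 2 * ((m:ℂ) + 1))) ≠ 0 := by simp [hM0, hM1]
  ring

lemma winner_v_v_lt (m : ℕ) (hm : 6 ≤ m) {i j : Fin (2 * m + 1)} (hij : i < j) :
    (inner ℂ (weaverV m i) (weaverV m j) : ℂ) = 0 := by
  have hM0 : ((m : ℂ)) ≠ 0 := Nat.cast_ne_zero.2 (by omega)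
  have hM1 := wM1_ne m
  have hij' : i ≠ j := ne_of_lt hij
  simp only [PiLp.inner_apply, RCLike.inner_apply', Fintype.sum_sum_type, weaverV, neg_div]
  rw [wb_sum_off hij', wc_sum_off hij, wd_sum_off hij']
  simp only [map_neg, map_div₀, map_add, map_one, map_mul, map_pow, Complex.conj_natCast,
    Finset.sum_const, Finset.card_univ, Fintype.card_fin, nsmul_eq_mul]
  push_cast
  field_simp
  ring

lemma winner_v_v_ne (m : ℕ) (hm : 6 ≤ m) {i j : Fin (2 * m + 1)} (hij : i ≠ j) :
    (inner ℂ (weaverV m i) (weaverV m j) : ℂ) = 0 := by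
  rcases lt_or_gt_of_ne hij with h | h
  · exact winner_v_v_lt m hm h
  · rw [← inner_conj_symm, winner_v_v_lt m hm h, map_zero]

/-- The family `v₀, v₁, ..., v_{2m+1}` is orthonormal in `H`. -/
theorem weaverFam_orthonormal (m : ℕ) (hm : 6 ≤ m) :
    Orthonormal ℂ (weaverFam m) := by
  rw [orthonormal_iff_ite]
  intro i j
  rcases Fin.eq_zero_or_eq_succ i with rfl | ⟨i', rfl⟩ <;>
    rcases Fin.eq_zero_or_eq_succ j with rfl | ⟨j', rfl⟩ <;>
    simp only [weaverFam, Fin.cases_zero, Fin.cases_succ]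
  · simpa using winner_v0_v0 m hm
  · rw [if_neg (Ne.symm (Fin.succ_ne_zero j'))]; exact winner_v0_v m hm j'
  · rw [if_neg (Fin.succ_ne_zero i')]
    rw [← inner_conj_symm, winner_v0_v m hm i', map_zero]
  · by_cases h : i' = j'
    · subst h; simpa using winner_v_v_diag m hm i'
    · rw [if_neg (fun hs => h (Fin.succ_inj.mp hs))]
      exact winner_v_v_ne m hm h
end

section
/- Let m ≥ 6, and let p, v_0, ..., v_{2m+1} be as in the explicit construction on H = ℂ^N (N = 2m³ + 8m² + 7m + 2). Let s be a diagonal symmetry on H, with s(a_i) = ε_i a_i (ε_i = ±1) for 1 ≤ i ≤ m² and s(b_i) = ε'_i b_i (ε'_i = ±1) for 1 ≤ i ≤ 2m+1. Then p s p (v_0) = (Σ_{i=1}^{m²} ε_i/(m+1)² + Σ_{i=1}^{2m+1} ε'_i/(m+1)²) v_0 + Σ_{k=1}^{2m+1} (Σ_{i=1}^{m²} (−ε_i)/(m²(m+1)²) + ε'_k/(m+1)²) v_k. -/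
open scoped ComplexConjugate

section WeaverAux
local notation "⟪" x ", " y "⟫" => @inner ℂ _ _ x y

theorem proj_span_on {ι E : Type*} [Fintype ι] [DecidableEq ι] [NormedAddCommGroup E]
    [InnerProductSpace ℂ E] [FiniteDimensional ℂ E] (v : ι → E) (hv : Orthonormal ℂ v) (z : E) :
    (Submodule.orthogonalProjection (Submodule.span ℂ (Set.range v)) z : E) = ∑ i, ⟪v i, z⟫ • v i := by
  apply Submodule.eq_starProjection_of_mem_of_inner_eq_zero
  · exact Submodule.sum_mem _ fun i _ => Submodule.smul_mem _ _
      (Submodule.subset_span ⟨i, rfl⟩)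
  · intro w hw
    induction hw using Submodule.span_induction with
    | mem x hx =>
      obtain ⟨k, rfl⟩ := hx
      rw [inner_sub_left, sum_inner]
      simp only [inner_smul_left, orthonormal_iff_ite.mp hv, mul_ite, mul_one, mul_zero,
        Finset.sum_ite_eq', Finset.mem_univ, if_true]
      rw [inner_conj_symm]; exact sub_self (⟪z, v k⟫)
    | zero => simp
    | add a b _ _ ha hb => rw [inner_add_right, ha, hb, add_zero]
    | smul c a _ ha => rw [inner_smul_right, ha, mul_zero]

-- inner product as a 4-fold sum
lemma weaver_inner (m : ℕ) (z w : WeaverH m) :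
    ⟪z, w⟫ = (∑ i : Fin (m ^ 2), conj (z (Sum.inl i)) * w (Sum.inl i))
      + (∑ i : Fin (2 * m + 1), conj (z (Sum.inr (Sum.inl i))) * w (Sum.inr (Sum.inl i)))
      + (∑ q : {q : Fin (2 * m + 1) × Fin (2 * m + 1) // q.1 < q.2},
          conj (z (Sum.inr (Sum.inr (Sum.inl q)))) * w (Sum.inr (Sum.inr (Sum.inl q))))
      + (∑ q : Fin (2 * m + 1) × Fin ((m + 1) ^ 2),
          conj (z (Sum.inr (Sum.inr (Sum.inr q)))) * w (Sum.inr (Sum.inr (Sum.inr q)))) := by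
  rw [PiLp.inner_apply]
  simp only [RCLike.inner_apply, Fintype.sum_sum_type]
  simp only [mul_comm, add_assoc]

lemma sum_ite_pull {β : Type*} [Fintype β] (P : Prop) [Decidable P] (f : β → ℂ) :
    ∑ b : β, (if P then f b else 0) = if P then ∑ b, f b else 0 := by
  split_ifs <;> simp

lemma sum_lt_subtype (m : ℕ) (f : Fin (2 * m + 1) × Fin (2 * m + 1) → ℂ) :
    (∑ q : {q : Fin (2 * m + 1) × Fin (2 * m + 1) // q.1 < q.2}, f q.1)
      = ∑ a : Fin (2 * m + 1), ∑ b : Fin (2 * m + 1), if a < b then f (a, b) else 0 := by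
  rw [← Finset.sum_subtype (Finset.univ.filter fun q : Fin (2*m+1) × Fin (2*m+1) => q.1 < q.2)
      (by simp) f]
  rw [Finset.sum_filter, Fintype.sum_prod_type]

lemma card_lt_sum (m : ℕ) (i : Fin (2*m+1)) (X : ℂ) :
    ∑ a : Fin (2*m+1), (if a < i then X else 0) = (i : ℕ) * X := by
  rw [← Finset.sum_filter]
  have : (Finset.univ.filter fun a : Fin (2*m+1) => a < i) = Finset.Iio i := by
    ext a; simp
  rw [this, Finset.sum_const, Fin.card_Iio, nsmul_eq_mul]

lemma card_gt_sum (m : ℕ) (i : Fin (2*m+1)) (X : ℂ) :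
    ∑ b : Fin (2*m+1), (if i < b then X else 0) = ((2*m : ℕ) - (i:ℕ) : ℕ) * X := by
  rw [← Finset.sum_filter]
  have : (Finset.univ.filter fun b : Fin (2*m+1) => i < b) = Finset.Ioi i := by
    ext a; simp
  rw [this, Finset.sum_const, Fin.card_Ioi, nsmul_eq_mul]
  norm_num


lemma sum_b_pair (n : ℕ) (i j : Fin n) (A B : ℂ) :
    ∑ k : Fin n, (if k = i then A else 0) * (if k = j then B else 0)
      = if i = j then A * B else 0 := by
  have h : ∀ k : Fin n, (if k = i then A else 0) * (if k = j then B else 0)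
      = if k = i then (if i = j then A * B else 0) else 0 := by
    intro k
    rcases eq_or_ne k i with rfl | h
    · simp only [if_pos rfl]; split_ifs <;> simp_all
    · simp [h]
  rw [Finset.sum_congr rfl fun k _ => h k, Finset.sum_ite_eq']
  simp

lemma sum_d_pair (m : ℕ) (i j : Fin (2*m+1)) (A B : ℂ) :
    ∑ q : Fin (2*m+1) × Fin ((m+1)^2),
        (if q.1 = i then A else 0) * (if q.1 = j then B else 0)
      = if i = j then (((m+1)^2 : ℕ) : ℂ) * (A * B) else 0 := by
  rw [Fintype.sum_prod_type]
  have h : ∀ k : Fin (2*m+1),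
      (∑ _l : Fin ((m+1)^2), (if k = i then A else 0) * (if k = j then B else 0))
        = (((m+1)^2 : ℕ) : ℂ) * ((if k = i then A else 0) * (if k = j then B else 0)) := by
    intro k
    rw [Finset.sum_const, Finset.card_univ, Fintype.card_fin, nsmul_eq_mul]
  rw [Finset.sum_congr rfl fun k _ => h k, ← Finset.mul_sum, sum_b_pair]
  rw [mul_ite, mul_zero]

lemma c_sum_diag (m : ℕ) (i : Fin (2*m+1)) (c : ℂ) (hc : conj c = c) :
    (∑ a : Fin (2*m+1), ∑ b : Fin (2*m+1),
        if a < b then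
          conj (if b = i then c else if a = i then -c else 0) *
            (if b = i then c else if a = i then -c else 0)
        else 0)
      = ((i:ℕ) : ℂ) * (c * c) + ((2*m - (i:ℕ) : ℕ) : ℂ) * (c * c) := by
  have hpt : ∀ a b : Fin (2*m+1),
      (if a < b then
          conj (if b = i then c else if a = i then -c else 0) *
            (if b = i then c else if a = i then -c else 0)
        else 0)
      = (if b = i then (if a < i then c * c else 0) else 0)
        + (if a = i then (if i < b then c * c else 0) else 0) := by
    intro a b
    rcases eq_or_ne b i with rfl | hb
    · rcases eq_or_ne a b with rfl | ha
      · simp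
      · simp [ha, hc]
    · rcases eq_or_ne a i with rfl | ha
      · simp [hb, hc, Ne.symm hb]
      · simp [ha, hb]
  rw [Finset.sum_congr rfl fun a _ => Finset.sum_congr rfl fun b _ => hpt a b]
  simp only [Finset.sum_add_distrib]
  rw [Finset.sum_congr rfl fun a (_ : a ∈ Finset.univ) =>
        (Finset.sum_ite_eq' Finset.univ i (fun _ => if a < i then c * c else 0))]
  simp only [Finset.mem_univ, if_true]
  rw [card_lt_sum]
  congr 1
  rw [Finset.sum_congr rfl fun a (_ : a ∈ Finset.univ) =>
        (sum_ite_pull (a = i) (fun b => if i < b then c * c else 0))]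
  rw [Finset.sum_ite_eq' Finset.univ i (fun _ => ∑ b : Fin (2*m+1), if i < b then c*c else 0)]
  simp only [Finset.mem_univ, if_true]
  rw [card_gt_sum]

lemma c_sum_ne (m : ℕ) (i j : Fin (2*m+1)) (hij : i ≠ j) (c : ℂ) (hc : conj c = c) :
    (∑ a : Fin (2*m+1), ∑ b : Fin (2*m+1),
        if a < b then
          conj (if b = i then c else if a = i then -c else 0) *
            (if b = j then c else if a = j then -c else 0)
        else 0)
      = -(c * c) := by
  have hpt : ∀ a b : Fin (2*m+1),
      (if a < b then
          conj (if b = i then c else if a = i then -c else 0) *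
            (if b = j then c else if a = j then -c else 0)
        else 0)
      = (if a = j then (if b = i then (if a < b then -(c*c) else 0) else 0) else 0)
        + (if a = i then (if b = j then (if a < b then -(c*c) else 0) else 0) else 0) := by
    intro a b
    split_ifs <;> simp_all [hc] <;> ring
  rw [Finset.sum_congr rfl fun a _ => Finset.sum_congr rfl fun b _ => hpt a b]
  simp only [Finset.sum_add_distrib]
  have e1 : ∀ (k l : Fin (2*m+1)),
      (∑ a : Fin (2*m+1), if a = k then
        (∑ b : Fin (2*m+1), if b = l then (if a < b then -(c*c) else 0) else 0) else 0)
      = if k < l then -(c*c) else 0 := by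
    intro k l
    rw [Finset.sum_ite_eq' Finset.univ k
      (fun a => ∑ b : Fin (2*m+1), if b = l then (if a < b then -(c*c) else 0) else 0)]
    simp only [Finset.mem_univ, if_true]
    rw [Finset.sum_ite_eq' Finset.univ l (fun b => if k < b then -(c*c) else 0)]
    simp
  have f1 : ∀ a : Fin (2*m+1),
      (∑ b : Fin (2*m+1), if a = j then (if b = i then (if a < b then -(c*c) else 0) else 0) else 0)
      = (if a = j then (∑ b : Fin (2*m+1), if b = i then (if a < b then -(c*c) else 0) else 0) else 0) :=
    fun a => sum_ite_pull _ _
  have f2 : ∀ a : Fin (2*m+1),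
      (∑ b : Fin (2*m+1), if a = i then (if b = j then (if a < b then -(c*c) else 0) else 0) else 0)
      = (if a = i then (∑ b : Fin (2*m+1), if b = j then (if a < b then -(c*c) else 0) else 0) else 0) :=
    fun a => sum_ite_pull _ _
  rw [Finset.sum_congr rfl fun a _ => f1 a, Finset.sum_congr rfl fun a _ => f2 a, e1 j i, e1 i j]
  rcases hij.lt_or_gt with h | h
  · simp [h, h.not_gt, h.ne']
  · simp [h, h.not_gt, h.ne']

lemma inner_v0_v0 (m : ℕ) : ⟪weaverV0 m, weaverV0 m⟫ = (1:ℂ) := by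
  have hM1 : ((m:ℂ)+1) ≠ 0 := Nat.cast_add_one_ne_zero m
  rw [weaver_inner m]
  have ha : ∀ k : Fin (m^2), conj (weaverV0 m (Sum.inl k)) * weaverV0 m (Sum.inl k)
      = conj (1/((m:ℂ)+1)) * (1/((m:ℂ)+1)) := fun k => rfl
  have hb : ∀ k : Fin (2*m+1), conj (weaverV0 m (Sum.inr (Sum.inl k))) * weaverV0 m (Sum.inr (Sum.inl k))
      = conj (1/((m:ℂ)+1)) * (1/((m:ℂ)+1)) := fun k => rfl
  have hcc : ∀ q : {q : Fin (2 * m + 1) × Fin (2 * m + 1) // q.1 < q.2},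
      conj (weaverV0 m (Sum.inr (Sum.inr (Sum.inl q)))) * weaverV0 m (Sum.inr (Sum.inr (Sum.inl q))) = 0 :=
    fun q => by rw [show weaverV0 m (Sum.inr (Sum.inr (Sum.inl q))) = 0 from rfl]; simp
  have hd : ∀ q : Fin (2 * m + 1) × Fin ((m + 1) ^ 2),
      conj (weaverV0 m (Sum.inr (Sum.inr (Sum.inr q)))) * weaverV0 m (Sum.inr (Sum.inr (Sum.inr q))) = 0 :=
    fun q => by rw [show weaverV0 m (Sum.inr (Sum.inr (Sum.inr q))) = 0 from rfl]; simp
  rw [Finset.sum_congr rfl fun k _ => ha k, Finset.sum_congr rfl fun k _ => hb k,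
    Finset.sum_congr rfl fun q _ => hcc q, Finset.sum_congr rfl fun q _ => hd q]
  simp only [Finset.sum_const, Finset.card_univ, Fintype.card_fin, nsmul_eq_mul,
    Finset.sum_const_zero, add_zero, Fintype.card_subtype]
  have : conj (1/((m:ℂ)+1)) = 1/((m:ℂ)+1) := by simp
  rw [this]
  push_cast
  field_simp
  ring

lemma inner_v0_v (m : ℕ) (hm : 1 ≤ m) (i : Fin (2*m+1)) :
    ⟪weaverV0 m, weaverV m i⟫ = (0:ℂ) := by
  have hM : (m:ℂ) ≠ 0 := Nat.cast_ne_zero.2 (by omega)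
  have hM1 : ((m:ℂ)+1) ≠ 0 := Nat.cast_add_one_ne_zero m
  rw [weaver_inner m]
  have ha : ∀ k : Fin (m^2), conj (weaverV0 m (Sum.inl k)) * weaverV m i (Sum.inl k)
      = conj (1/((m:ℂ)+1)) * (-1 / ((m:ℂ)^2 * ((m:ℂ)+1))) := fun k => rfl
  have hb : ∀ k : Fin (2*m+1), conj (weaverV0 m (Sum.inr (Sum.inl k))) * weaverV m i (Sum.inr (Sum.inl k))
      = if k = i then conj (1/((m:ℂ)+1)) * (1/((m:ℂ)+1)) else 0 := by
    intro k
    rw [show weaverV0 m (Sum.inr (Sum.inl k)) = 1/((m:ℂ)+1) from rfl,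
      show weaverV m i (Sum.inr (Sum.inl k)) = (if k = i then 1/((m:ℂ)+1) else 0) from rfl,
      mul_ite, mul_zero]
  have hcc : ∀ q : {q : Fin (2 * m + 1) × Fin (2 * m + 1) // q.1 < q.2},
      conj (weaverV0 m (Sum.inr (Sum.inr (Sum.inl q)))) * weaverV m i (Sum.inr (Sum.inr (Sum.inl q))) = 0 :=
    fun q => by rw [show weaverV0 m (Sum.inr (Sum.inr (Sum.inl q))) = 0 from rfl]; simp
  have hd : ∀ q : Fin (2 * m + 1) × Fin ((m + 1) ^ 2),
      conj (weaverV0 m (Sum.inr (Sum.inr (Sum.inr q)))) * weaverV m i (Sum.inr (Sum.inr (Sum.inr q))) = 0 :=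
    fun q => by rw [show weaverV0 m (Sum.inr (Sum.inr (Sum.inr q))) = 0 from rfl]; simp
  rw [Finset.sum_congr rfl fun k _ => ha k, Finset.sum_congr rfl fun k _ => hb k,
    Finset.sum_congr rfl fun q _ => hcc q, Finset.sum_congr rfl fun q _ => hd q]
  rw [Finset.sum_ite_eq' Finset.univ i (fun _ => conj (1/((m:ℂ)+1)) * (1/((m:ℂ)+1)))]
  simp only [Finset.sum_const, Finset.card_univ, Fintype.card_fin, nsmul_eq_mul,
    Finset.sum_const_zero, add_zero, Finset.mem_univ, if_true]
  have : conj (1/((m:ℂ)+1)) = 1/((m:ℂ)+1) := by simp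
  rw [this]
  push_cast
  field_simp
  ring

lemma inner_v_v0 (m : ℕ) (hm : 1 ≤ m) (i : Fin (2*m+1)) :
    ⟪weaverV m i, weaverV0 m⟫ = (0:ℂ) := by
  rw [← inner_conj_symm, inner_v0_v m hm i, map_zero]

lemma alg_diag (M I : ℂ) (hM : M ≠ 0) (hM1 : M + 1 ≠ 0) :
    M^2 * ((-1/(M^2*(M+1))) * (-1/(M^2*(M+1)))) + (1/(M+1))*(1/(M+1))
      + (I * ((1/(M*(M+1)))*(1/(M*(M+1)))) + (2*M - I)*((1/(M*(M+1)))*(1/(M*(M+1)))))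
      + (M+1)^2 * (1/M * (1/M) * ((M-1)/(M+1))) = 1 := by
  have hD : (M^2*(M+1)^2) ≠ 0 := mul_ne_zero (pow_ne_zero _ hM) (pow_ne_zero _ hM1)
  rw [show M^2 * ((-1/(M^2*(M+1))) * (-1/(M^2*(M+1)))) = 1/(M^2*(M+1)^2) * 1 from by
      field_simp,
    show (1/(M+1))*(1/(M+1)) = 1/(M^2*(M+1)^2) * M^2 from by field_simp,
    show (I * ((1/(M*(M+1)))*(1/(M*(M+1)))) + (2*M - I)*((1/(M*(M+1)))*(1/(M*(M+1)))))
        = 1/(M^2*(M+1)^2) * (2*M) from by field_simp; ring,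
    show (M+1)^2 * (1/M * (1/M) * ((M-1)/(M+1))) = 1/(M^2*(M+1)^2) * ((M+1)^3*(M-1)) from by
      field_simp]
  rw [← mul_add, ← mul_add, ← mul_add,
    show (1 + M^2 + (2*M) + (M+1)^3*(M-1)) = M^2*(M+1)^2 from by ring,
    one_div_mul_cancel hD]

lemma inner_v_v (m : ℕ) (hm : 1 ≤ m) (i j : Fin (2*m+1)) :
    ⟪weaverV m i, weaverV m j⟫ = if i = j then (1:ℂ) else 0 := by
  have hM : (m:ℂ) ≠ 0 := Nat.cast_ne_zero.2 (by omega)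
  have hM1 : ((m:ℂ)+1) ≠ 0 := Nat.cast_add_one_ne_zero m
  have hc : conj (1/((m:ℂ)*((m:ℂ)+1))) = 1/((m:ℂ)*((m:ℂ)+1)) := by simp
  set R : ℂ := (1 / (m : ℂ)) * ((Real.sqrt (((m : ℝ) - 1) / ((m : ℝ) + 1)) : ℝ) : ℂ) with hRdef
  have hR : (starRingEnd ℂ) R * R = (1/(m:ℂ)) * (1/(m:ℂ)) * (((m:ℂ)-1)/((m:ℂ)+1)) := by
    have h1 : (starRingEnd ℂ) R = R := by rw [hRdef]; simp [Complex.conj_ofReal]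
    have h2 : ((Real.sqrt (((m:ℝ)-1)/((m:ℝ)+1)) : ℝ) : ℂ)
        * ((Real.sqrt (((m:ℝ)-1)/((m:ℝ)+1)) : ℝ) : ℂ) = ((m:ℂ)-1)/((m:ℂ)+1) := by
      rw [← Complex.ofReal_mul, Real.mul_self_sqrt
        (div_nonneg (by simp [Nat.one_le_cast.mpr hm]) (by positivity))]
      push_cast; ring
    rw [h1, hRdef, mul_mul_mul_comm, h2]
  rw [weaver_inner m]
  have ha : ∀ k : Fin (m^2), conj (weaverV m i (Sum.inl k)) * weaverV m j (Sum.inl k)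
      = (starRingEnd ℂ) (-1/((m:ℂ)^2*((m:ℂ)+1))) * (-1/((m:ℂ)^2*((m:ℂ)+1))) := fun k => rfl
  have hb : ∀ k : Fin (2*m+1),
      conj (weaverV m i (Sum.inr (Sum.inl k))) * weaverV m j (Sum.inr (Sum.inl k))
      = (if k = i then (starRingEnd ℂ) (1/((m:ℂ)+1)) else 0) * (if k = j then 1/((m:ℂ)+1) else 0) := by
    intro k
    rw [show weaverV m i (Sum.inr (Sum.inl k)) = (if k = i then 1/((m:ℂ)+1) else 0) from rfl,
      show weaverV m j (Sum.inr (Sum.inl k)) = (if k = j then 1/((m:ℂ)+1) else 0) from rfl,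
      apply_ite conj, map_zero]
  have hd : ∀ q : Fin (2 * m + 1) × Fin ((m + 1) ^ 2),
      conj (weaverV m i (Sum.inr (Sum.inr (Sum.inr q)))) * weaverV m j (Sum.inr (Sum.inr (Sum.inr q)))
      = (if q.1 = i then (starRingEnd ℂ) R else 0) * (if q.1 = j then R else 0) := by
    intro q
    rw [show weaverV m i (Sum.inr (Sum.inr (Sum.inr q))) = (if q.1 = i then R else 0) from rfl,
      show weaverV m j (Sum.inr (Sum.inr (Sum.inr q))) = (if q.1 = j then R else 0) from rfl,
      apply_ite conj, map_zero]
  have hcent : ∀ (k : Fin (2*m+1)) (q : {q : Fin (2 * m + 1) × Fin (2 * m + 1) // q.1 < q.2}),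
      weaverV m k (Sum.inr (Sum.inr (Sum.inl q)))
      = (if q.1.2 = k then 1/((m:ℂ)*((m:ℂ)+1)) else
          if q.1.1 = k then -(1/((m:ℂ)*((m:ℂ)+1))) else 0) := by
    intro k q
    rw [show weaverV m k (Sum.inr (Sum.inr (Sum.inl q)))
        = (if q.1.2 = k then 1/((m:ℂ)*((m:ℂ)+1)) else
            if q.1.1 = k then -1/((m:ℂ)*((m:ℂ)+1)) else 0) from rfl, neg_div]
  have hcsum : (∑ q : {q : Fin (2 * m + 1) × Fin (2 * m + 1) // q.1 < q.2},
      conj (weaverV m i (Sum.inr (Sum.inr (Sum.inl q)))) * weaverV m j (Sum.inr (Sum.inr (Sum.inl q))))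
      = ∑ a : Fin (2*m+1), ∑ b : Fin (2*m+1),
          if a < b then
            conj (if b = i then 1/((m:ℂ)*((m:ℂ)+1)) else if a = i then -(1/((m:ℂ)*((m:ℂ)+1))) else 0) *
              (if b = j then 1/((m:ℂ)*((m:ℂ)+1)) else if a = j then -(1/((m:ℂ)*((m:ℂ)+1))) else 0)
          else 0 := by
    rw [Finset.sum_congr rfl fun q _ => by rw [hcent i q, hcent j q]]
    exact sum_lt_subtype m (fun p =>
      conj (if p.2 = i then 1/((m:ℂ)*((m:ℂ)+1)) else if p.1 = i then -(1/((m:ℂ)*((m:ℂ)+1))) else 0) *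
        (if p.2 = j then 1/((m:ℂ)*((m:ℂ)+1)) else if p.1 = j then -(1/((m:ℂ)*((m:ℂ)+1))) else 0))
  rw [Finset.sum_congr rfl fun k _ => ha k, Finset.sum_congr rfl fun k _ => hb k,
    Finset.sum_congr rfl fun q _ => hd q, hcsum, sum_b_pair, sum_d_pair]
  have hca : (starRingEnd ℂ) (-1/((m:ℂ)^2*((m:ℂ)+1))) = -1/((m:ℂ)^2*((m:ℂ)+1)) := by simp
  have hcb : (starRingEnd ℂ) (1/((m:ℂ)+1)) = 1/((m:ℂ)+1) := by simp
  rcases eq_or_ne i j with rfl | hij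
  · rw [c_sum_diag m i (1/((m:ℂ)*((m:ℂ)+1))) hc]
    rw [if_pos rfl, if_pos rfl, if_pos rfl, hca, hcb, hR]
    have hle : (i : ℕ) ≤ 2*m := by omega
    rw [Nat.cast_sub hle]
    simp only [Finset.sum_const, Finset.card_univ, Fintype.card_fin, nsmul_eq_mul]
    push_cast
    linear_combination alg_diag (m:ℂ) ((i:ℕ):ℂ) hM hM1
  · rw [c_sum_ne m i j hij (1/((m:ℂ)*((m:ℂ)+1))) hc]
    rw [if_neg hij, if_neg hij, if_neg hij, hca]
    simp only [Finset.sum_const, Finset.card_univ, Fintype.card_fin, nsmul_eq_mul]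
    push_cast
    field_simp
    ring

lemma weaver_orthonormal (m : ℕ) (hm : 1 ≤ m) : Orthonormal ℂ (weaverFam m) := by
  rw [orthonormal_iff_ite]
  intro i j
  induction i using Fin.cases with
  | zero =>
    induction j using Fin.cases with
    | zero => simpa [weaverFam] using inner_v0_v0 m
    | succ j => simp [weaverFam, inner_v0_v m hm j, (Fin.succ_ne_zero j).symm]
  | succ i =>
    induction j using Fin.cases with
    | zero => simp [weaverFam, inner_v_v0 m hm i, Fin.succ_ne_zero i]
    | succ j => simpa [weaverFam, Fin.succ_inj] using inner_v_v m hm i j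

lemma key_inner (m : ℕ) (s : WeaverH m →L[ℂ] WeaverH m) (ε : WeaverIdx m → ℝ)
    (hs : ∀ x : WeaverIdx m,
      s (EuclideanSpace.single x (1 : ℂ)) = (ε x : ℂ) • EuclideanSpace.single x (1 : ℂ))
    (v z : WeaverH m) :
    ⟪v, s z⟫ = ∑ x : WeaverIdx m, conj (v x) * ((ε x : ℂ) * z x) := by
  have hdec : z = ∑ x : WeaverIdx m, z x • EuclideanSpace.single x (1:ℂ) := by
    have h := (EuclideanSpace.basisFun (WeaverIdx m) ℂ).sum_repr z
    simp only [EuclideanSpace.basisFun_apply, EuclideanSpace.basisFun_repr] at h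
    exact h.symm
  conv_lhs => rw [hdec]
  rw [map_sum, inner_sum]
  refine Finset.sum_congr rfl fun x _ => ?_
  rw [map_smul, hs x, inner_smul_right, inner_smul_right,
    EuclideanSpace.inner_single_right]
  ring

lemma frac1 (a e : ℂ) : (1/a) * (e * (1/a)) = e/a^2 := by ring
lemma frac2 (a b e : ℂ) : (-1/(b*a)) * (e * (1/a)) = -e/(b*a^2) := by ring

lemma coeff0 (m : ℕ) (hm : 1 ≤ m) (s : WeaverH m →L[ℂ] WeaverH m) (ε : WeaverIdx m → ℝ)
    (hs : ∀ x : WeaverIdx m,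
      s (EuclideanSpace.single x (1 : ℂ)) = (ε x : ℂ) • EuclideanSpace.single x (1 : ℂ)) :
    ⟪weaverV0 m, s (weaverV0 m)⟫
      = (∑ i : Fin (m ^ 2), (ε (Sum.inl i) : ℂ) / ((m : ℂ) + 1) ^ 2) +
          ∑ i : Fin (2 * m + 1), (ε (Sum.inr (Sum.inl i)) : ℂ) / ((m : ℂ) + 1) ^ 2 := by
  have hM1 : ((m:ℂ)+1) ≠ 0 := Nat.cast_add_one_ne_zero m
  have hcb : conj (1/((m:ℂ)+1)) = 1/((m:ℂ)+1) := by simp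
  rw [key_inner m s ε hs]
  simp only [Fintype.sum_sum_type]
  have ha : ∀ i : Fin (m^2),
      conj (weaverV0 m (Sum.inl i)) * ((ε (Sum.inl i) : ℂ) * weaverV0 m (Sum.inl i))
      = (ε (Sum.inl i) : ℂ) / ((m : ℂ) + 1) ^ 2 := by
    intro i
    rw [show weaverV0 m (Sum.inl i) = 1/((m:ℂ)+1) from rfl, hcb]
    exact frac1 _ _
  have hb : ∀ i : Fin (2*m+1),
      conj (weaverV0 m (Sum.inr (Sum.inl i))) *
        ((ε (Sum.inr (Sum.inl i)) : ℂ) * weaverV0 m (Sum.inr (Sum.inl i)))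
      = (ε (Sum.inr (Sum.inl i)) : ℂ) / ((m : ℂ) + 1) ^ 2 := by
    intro i
    rw [show weaverV0 m (Sum.inr (Sum.inl i)) = 1/((m:ℂ)+1) from rfl, hcb]
    exact frac1 _ _
  have hcc : ∀ q : {q : Fin (2 * m + 1) × Fin (2 * m + 1) // q.1 < q.2},
      conj (weaverV0 m (Sum.inr (Sum.inr (Sum.inl q)))) *
        ((ε (Sum.inr (Sum.inr (Sum.inl q))) : ℂ) * weaverV0 m (Sum.inr (Sum.inr (Sum.inl q)))) = 0 := by
    intro q
    rw [show weaverV0 m (Sum.inr (Sum.inr (Sum.inl q))) = 0 from rfl]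
    simp
  have hd : ∀ q : Fin (2 * m + 1) × Fin ((m + 1) ^ 2),
      conj (weaverV0 m (Sum.inr (Sum.inr (Sum.inr q)))) *
        ((ε (Sum.inr (Sum.inr (Sum.inr q))) : ℂ) * weaverV0 m (Sum.inr (Sum.inr (Sum.inr q)))) = 0 := by
    intro q
    rw [show weaverV0 m (Sum.inr (Sum.inr (Sum.inr q))) = 0 from rfl]
    simp
  rw [Finset.sum_congr rfl fun i _ => ha i, Finset.sum_congr rfl fun i _ => hb i,
    Finset.sum_congr rfl fun q _ => hcc q, Finset.sum_congr rfl fun q _ => hd q]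
  simp

lemma coeffk (m : ℕ) (hm : 1 ≤ m) (s : WeaverH m →L[ℂ] WeaverH m) (ε : WeaverIdx m → ℝ)
    (hs : ∀ x : WeaverIdx m,
      s (EuclideanSpace.single x (1 : ℂ)) = (ε x : ℂ) • EuclideanSpace.single x (1 : ℂ))
    (k : Fin (2*m+1)) :
    ⟪weaverV m k, s (weaverV0 m)⟫
      = (∑ i : Fin (m ^ 2), (-(ε (Sum.inl i)) : ℂ) / ((m : ℂ) ^ 2 * ((m : ℂ) + 1) ^ 2)) +
          (ε (Sum.inr (Sum.inl k)) : ℂ) / ((m : ℂ) + 1) ^ 2 := by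
  have hM : (m:ℂ) ≠ 0 := Nat.cast_ne_zero.2 (by omega)
  have hM1 : ((m:ℂ)+1) ≠ 0 := Nat.cast_add_one_ne_zero m
  have hcb : conj (1/((m:ℂ)+1)) = 1/((m:ℂ)+1) := by simp
  have hca : conj (-1/((m:ℂ)^2*((m:ℂ)+1))) = -1/((m:ℂ)^2*((m:ℂ)+1)) := by simp
  rw [key_inner m s ε hs]
  simp only [Fintype.sum_sum_type]
  have ha : ∀ i : Fin (m^2),
      conj (weaverV m k (Sum.inl i)) * ((ε (Sum.inl i) : ℂ) * weaverV0 m (Sum.inl i))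
      = (-(ε (Sum.inl i)) : ℂ) / ((m : ℂ) ^ 2 * ((m : ℂ) + 1) ^ 2) := by
    intro i
    rw [show weaverV0 m (Sum.inl i) = 1/((m:ℂ)+1) from rfl,
      show weaverV m k (Sum.inl i) = -1/((m:ℂ)^2*((m:ℂ)+1)) from rfl, hca]
    exact frac2 _ _ _
  have hb : ∀ i : Fin (2*m+1),
      conj (weaverV m k (Sum.inr (Sum.inl i))) *
        ((ε (Sum.inr (Sum.inl i)) : ℂ) * weaverV0 m (Sum.inr (Sum.inl i)))
      = if i = k then (ε (Sum.inr (Sum.inl i)) : ℂ) / ((m : ℂ) + 1) ^ 2 else 0 := by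
    intro i
    rw [show weaverV0 m (Sum.inr (Sum.inl i)) = 1/((m:ℂ)+1) from rfl,
      show weaverV m k (Sum.inr (Sum.inl i)) = (if i = k then 1/((m:ℂ)+1) else 0) from rfl,
      apply_ite conj, map_zero, hcb, ite_mul, zero_mul]
    congr 1
    exact frac1 _ _
  have hcc : ∀ q : {q : Fin (2 * m + 1) × Fin (2 * m + 1) // q.1 < q.2},
      conj (weaverV m k (Sum.inr (Sum.inr (Sum.inl q)))) *
        ((ε (Sum.inr (Sum.inr (Sum.inl q))) : ℂ) * weaverV0 m (Sum.inr (Sum.inr (Sum.inl q)))) = 0 := by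
    intro q
    rw [show weaverV0 m (Sum.inr (Sum.inr (Sum.inl q))) = 0 from rfl]
    simp
  have hd : ∀ q : Fin (2 * m + 1) × Fin ((m + 1) ^ 2),
      conj (weaverV m k (Sum.inr (Sum.inr (Sum.inr q)))) *
        ((ε (Sum.inr (Sum.inr (Sum.inr q))) : ℂ) * weaverV0 m (Sum.inr (Sum.inr (Sum.inr q)))) = 0 := by
    intro q
    rw [show weaverV0 m (Sum.inr (Sum.inr (Sum.inr q))) = 0 from rfl]
    simp
  rw [Finset.sum_congr rfl fun i _ => ha i, Finset.sum_congr rfl fun i _ => hb i,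
    Finset.sum_congr rfl fun q _ => hcc q, Finset.sum_congr rfl fun q _ => hd q,
    Finset.sum_ite_eq' Finset.univ k (fun i => (ε (Sum.inr (Sum.inl i)) : ℂ) / ((m : ℂ) + 1) ^ 2)]
  simp

/-- For a diagonal symmetry `s` (each standard basis vector is an eigenvector
with eigenvalue `±1`), with `s(aᵢ) = εᵢ aᵢ` and `s(bᵢ) = ε'ᵢ bᵢ`, one has
`psp(v₀) = (Σᵢ εᵢ/(m+1)² + Σᵢ ε'ᵢ/(m+1)²) v₀
  + Σₖ (Σᵢ (−εᵢ)/(m²(m+1)²) + ε'ₖ/(m+1)²) vₖ`. -/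
theorem weaver_psp_v0_expansion (m : ℕ) (hm : 6 ≤ m)
    (s : WeaverH m →L[ℂ] WeaverH m) (ε : WeaverIdx m → ℝ)
    (hε : ∀ x, ε x = 1 ∨ ε x = -1)
    (hs : ∀ x : WeaverIdx m,
      s (EuclideanSpace.single x (1 : ℂ)) = (ε x : ℂ) • EuclideanSpace.single x (1 : ℂ)) :
    weaverP m (s (weaverP m (weaverV0 m))) =
      ((∑ i : Fin (m ^ 2), (ε (Sum.inl i) : ℂ) / ((m : ℂ) + 1) ^ 2) +
        ∑ i : Fin (2 * m + 1), (ε (Sum.inr (Sum.inl i)) : ℂ) / ((m : ℂ) + 1) ^ 2) •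
          weaverV0 m +
      ∑ k : Fin (2 * m + 1),
        ((∑ i : Fin (m ^ 2), (-(ε (Sum.inl i)) : ℂ) / ((m : ℂ) ^ 2 * ((m : ℂ) + 1) ^ 2)) +
          (ε (Sum.inr (Sum.inl k)) : ℂ) / ((m : ℂ) + 1) ^ 2) • weaverV m k := by
  have hm1 : 1 ≤ m := by omega
  have hon := weaver_orthonormal m hm1
  have hproj : ∀ z : WeaverH m,
      weaverP m z = ∑ i : Fin (2*m+1+1), ⟪weaverFam m i, z⟫ • weaverFam m i := by
    intro z
    show ((Submodule.orthogonalProjection (weaverSpan m) z : WeaverH m)) = _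
    rw [weaverSpan]
    exact proj_span_on (weaverFam m) hon z
  have h0 : weaverFam m 0 = weaverV0 m := by simp [weaverFam]
  have hsucc : ∀ k : Fin (2*m+1), weaverFam m k.succ = weaverV m k := by
    intro k; simp [weaverFam]
  have hv0mem : weaverV0 m ∈ weaverSpan m := by
    rw [← h0]; exact Submodule.subset_span ⟨0, rfl⟩
  have hpv0 : weaverP m (weaverV0 m) = weaverV0 m := by
    show ((Submodule.orthogonalProjection (weaverSpan m) (weaverV0 m) : WeaverH m)) = _
    exact Submodule.starProjection_eq_self_iff.mpr hv0mem
  rw [hpv0, hproj, Fin.sum_univ_succ]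
  rw [h0]
  rw [Finset.sum_congr rfl fun k (_ : k ∈ Finset.univ) => by rw [hsucc k]]
  rw [coeff0 m hm1 s ε hs]
  exact congrArg _ (Finset.sum_congr rfl fun k _ => by rw [coeffk m hm1 s ε hs k])

end WeaverAux
end

section
/- For every real constant C > 0 there exist a positive integer n and an orthogonal projection p ∈ M_n(ℂ) with δ_p > 0 such that for every symmetry s ∈ M_n(ℂ) diagonal with respect to the standard basis, ‖p s p‖ ≥ C · δ_p. -/
/-!
Let `H` be a finite abelian group and `S` the set of characters of `H × H` that are trivial on
one of the two factors, so `#S ≤ 2 |H|`, and let `p` be the orthogonal projection onto the span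
of `S`; its diagonal is constant, `δ_p = #S / |H|²`. A diagonal symmetry `s` is a unimodular
function on `H × H`, so its Fourier coefficients satisfy `∑ |ŝ|² = 1`, and `p s p` maps a
character `ψ ∈ S` to `∑_{φ ∈ S} ŝ(φ - ψ) φ`. Every character is a difference of two elements
of `S`, so averaging over `ψ ∈ S` produces a `ψ` with `‖p s p ψ‖² ≥ ‖ψ‖² / #S`. Hence
`‖p s p‖ ≥ #S^(-1/2)`, which beats `C δ_p` as soon as `|H| ≥ 8 C²`.
-/

open Finset Matrix ComplexConjugate
open scoped Pointwise

lemma Finset.nonempty_of_sub_eq_univ {Γ : Type*} [AddGroup Γ] [Fintype Γ] [DecidableEq Γ]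
    {S : Finset Γ} (hS : S - S = univ) : S.Nonempty :=
  (sub_nonempty.mp (hS ▸ univ_nonempty)).1

lemma Finset.exists_mem_sum_sub_ge {Γ : Type*} [AddGroup Γ] [Fintype Γ] [DecidableEq Γ]
    {S : Finset Γ} (hS : S - S = univ) (f : Γ → ℝ) (hf : 0 ≤ f) :
    ∃ b ∈ S, ∑ γ, f γ ≤ #S * ∑ a ∈ S, f (a - b) := by
  have hcover : ∑ γ, f γ ≤ ∑ b ∈ S, ∑ a ∈ S, f (a - b) := by
    rw [← hS, sub_def, sum_comm, ← sum_product (f := fun x : Γ × Γ => f (x.1 - x.2))]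
    exact sum_image_le_of_nonneg fun _ _ => hf _
  have hne := nonempty_of_sub_eq_univ hS
  have hS0 : (0 : ℝ) < #S := by exact_mod_cast hne.card_pos
  obtain ⟨b, hb, hle⟩ := exists_le_of_sum_le hne (f := fun _ => (#S : ℝ)⁻¹ * ∑ γ, f γ)
    (g := fun b => ∑ a ∈ S, f (a - b))
    (by rwa [sum_const, nsmul_eq_mul, mul_inv_cancel_left₀ hS0.ne'])
  exact ⟨b, hb, by rwa [inv_mul_le_iff₀ hS0] at hle⟩

namespace Matrix

variable {𝕜 ι : Type*} [RCLike 𝕜] [Fintype ι] [DecidableEq ι]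

lemma sum_norm_mulVec_sq_le (M : Matrix ι ι 𝕜) (v : ι → 𝕜) :
    ∑ i, ‖(M *ᵥ v) i‖ ^ 2 ≤ ‖toEuclideanCLM (𝕜 := 𝕜) M‖ ^ 2 * ∑ i, ‖v i‖ ^ 2 := by
  have h := (toEuclideanCLM (𝕜 := 𝕜) M).le_opNorm (WithLp.toLp 2 v)
  rw [toEuclideanCLM_toLp] at h
  have h2 := pow_le_pow_left₀ (norm_nonneg _) h 2
  rwa [mul_pow, EuclideanSpace.norm_sq_eq, EuclideanSpace.norm_sq_eq] at h2

lemma norm_toEuclideanCLM_submatrix_equiv {ι' : Type*} [Fintype ι'] [DecidableEq ι']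
    (A : Matrix ι' ι' 𝕜) (e : ι ≃ ι') :
    ‖toEuclideanCLM (𝕜 := 𝕜) (A.submatrix e e)‖ = ‖toEuclideanCLM (𝕜 := 𝕜) A‖ := by
  let L := LinearIsometryEquiv.piLpCongrLeft 2 𝕜 𝕜 e
  have h : toEuclideanCLM (𝕜 := 𝕜) (A.submatrix e e) =
      (L.symm : _ →L[𝕜] _).comp ((toEuclideanCLM (𝕜 := 𝕜) A).comp (L : _ →L[𝕜] _)) := by
    ext x i
    simp only [ofLp_toEuclideanCLM, submatrix_mulVec_equiv, Function.comp_apply,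
      LinearIsometryEquiv.piLpCongrLeft_symm, ContinuousLinearMap.comp_apply,
      ContinuousLinearEquiv.coe_coe, LinearIsometryEquiv.coe_toContinuousLinearEquiv,
      LinearIsometryEquiv.piLpCongrLeft_apply, Equiv.piCongrLeft', Equiv.symm_symm,
      eq_rec_constant, Equiv.coe_fn_mk, L]
    rfl
  rw [h, ContinuousLinearMap.opNorm_linearIsometryEquiv_comp,
    ContinuousLinearMap.opNorm_comp_linearIsometryEquiv]

lemma IsDiag.norm_apply_self_eq_one {s : Matrix ι ι 𝕜} (hdiag : s.IsDiag) (hs : s * s = 1)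
    (j : ι) : ‖s j j‖ = 1 := by
  have h := congrFun₂ hs j j
  rw [← hdiag.diagonal_diag, diagonal_mul_diagonal, diagonal_apply_eq, one_apply_eq,
    diag_apply] at h
  simpa [← sq, pow_eq_one_iff_of_nonneg] using congrArg norm h

end Matrix

namespace AddChar

variable {α : Type*} [AddCommGroup α] [Fintype α]

noncomputable def fourierCoeff (v : α → ℂ) (ψ : AddChar α ℂ) : ℂ :=
  (Fintype.card α : ℂ)⁻¹ * ∑ j, v j * ψ (-j)

lemma conj_fourierCoeff (v : α → ℂ) (ψ : AddChar α ℂ) :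
    conj (fourierCoeff v ψ) = (Fintype.card α : ℂ)⁻¹ * ∑ j, conj (v j) * ψ j := by
  simp [fourierCoeff, map_neg_eq_conj]

lemma sum_norm_fourierCoeff_sq (v : α → ℂ) :
    ∑ ψ, ‖fourierCoeff v ψ‖ ^ 2 = (Fintype.card α : ℝ)⁻¹ * ∑ j, ‖v j‖ ^ 2 := by
  classical
  have hN : (Fintype.card α : ℂ) ≠ 0 := by exact_mod_cast Fintype.card_ne_zero
  apply Complex.ofReal_injective
  push_cast
  simp_rw [← Complex.mul_conj']
  have hψ : ∀ ψ : AddChar α ℂ, fourierCoeff v ψ * conj (fourierCoeff v ψ) =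
      (Fintype.card α : ℂ)⁻¹ ^ 2 * ∑ j, ∑ k, v j * conj (v k) * ψ (k - j) := by
    intro ψ
    rw [conj_fourierCoeff, fourierCoeff, mul_mul_mul_comm, sum_mul_sum, sq]
    refine congrArg _ (sum_congr rfl fun j _ => sum_congr rfl fun k _ => ?_)
    rw [sub_eq_neg_add, map_add_eq_mul]
    ring
  simp_rw [hψ, ← mul_sum]
  rw [sum_comm]
  simp_rw [sum_comm (γ := AddChar α ℂ), ← mul_sum, sum_apply_eq_ite, sub_eq_zero, mul_ite,
    mul_zero, sum_ite_eq']
  simp only [mem_univ, if_true, ← sum_mul]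
  field_simp

lemma sum_apply_mul_apply_neg (ψ φ : AddChar α ℂ) :
    ∑ j, ψ j * φ (-j) = if ψ = φ then (Fintype.card α : ℂ) else 0 := by
  simp_rw [← sub_apply, sum_eq_ite, sub_eq_zero]

lemma fourierCoeff_coe (ψ φ : AddChar α ℂ) :
    fourierCoeff ψ φ = if φ = ψ then 1 else 0 := by
  rw [fourierCoeff, sum_apply_mul_apply_neg]
  split_ifs <;> simp_all

lemma fourierCoeff_mul_coe (v : α → ℂ) (ψ φ : AddChar α ℂ) :
    fourierCoeff (v * ⇑ψ) φ = fourierCoeff v (φ - ψ) := by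
  simp only [fourierCoeff, Pi.mul_apply, sub_apply, neg_neg, mul_assoc, mul_comm (ψ _)]

lemma fourierCoeff_sum_smul (S : Finset (AddChar α ℂ)) (c : AddChar α ℂ → ℂ)
    (φ : AddChar α ℂ) :
    fourierCoeff (∑ ψ ∈ S, c ψ • ⇑ψ) φ = if φ ∈ S then c φ else 0 := by
  have h : fourierCoeff (∑ ψ ∈ S, c ψ • ⇑ψ) φ = ∑ ψ ∈ S, c ψ * fourierCoeff ψ φ := by
    simp only [fourierCoeff, Finset.sum_apply, Pi.smul_apply, smul_eq_mul, Finset.sum_mul,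
      Finset.mul_sum]
    rw [Finset.sum_comm]
    exact sum_congr rfl fun _ _ => sum_congr rfl fun _ _ => by ring
  simp [h, fourierCoeff_coe]

lemma sum_norm_sum_smul_sq (S : Finset (AddChar α ℂ)) (c : AddChar α ℂ → ℂ) :
    ∑ i, ‖(∑ ψ ∈ S, c ψ • ⇑ψ) i‖ ^ 2 = Fintype.card α * ∑ ψ ∈ S, ‖c ψ‖ ^ 2 := by
  have h := sum_norm_fourierCoeff_sq (∑ ψ ∈ S, c ψ • ⇑ψ)
  simp only [fourierCoeff_sum_smul, apply_ite (‖·‖ ^ 2), norm_zero, sq (0 : ℝ), mul_zero,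
    sum_ite_mem, univ_inter] at h
  rw [h, mul_inv_cancel_left₀ (by exact_mod_cast Fintype.card_ne_zero)]

/-- The orthogonal projection onto the span of the characters in `S`. -/
noncomputable def proj (S : Finset (AddChar α ℂ)) : Matrix α α ℂ :=
  Matrix.of fun i j => (Fintype.card α : ℂ)⁻¹ * ∑ ψ ∈ S, ψ (i - j)

lemma proj_mulVec (S : Finset (AddChar α ℂ)) (v : α → ℂ) :
    proj S *ᵥ v = ∑ φ ∈ S, fourierCoeff v φ • ⇑φ := by
  ext i
  simp only [mulVec, dotProduct, proj, of_apply, fourierCoeff, Finset.sum_apply,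
    Pi.smul_apply, smul_eq_mul, Finset.sum_mul, Finset.mul_sum, sub_eq_add_neg, map_add_eq_mul]
  rw [Finset.sum_comm]
  exact sum_congr rfl fun _ _ => sum_congr rfl fun _ _ => by ring

lemma proj_mulVec_coe {S : Finset (AddChar α ℂ)} {ψ : AddChar α ℂ} (hψ : ψ ∈ S) :
    proj S *ᵥ ⇑ψ = ψ := by
  simp [proj_mulVec, fourierCoeff_coe, ite_smul, hψ]

lemma proj_mulVec_sum_smul (S : Finset (AddChar α ℂ)) (c : AddChar α ℂ → ℂ) :
    proj S *ᵥ (∑ ψ ∈ S, c ψ • ⇑ψ) = ∑ ψ ∈ S, c ψ • ⇑ψ := by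
  rw [proj_mulVec]
  exact sum_congr rfl fun ψ hψ => by rw [fourierCoeff_sum_smul, if_pos hψ]

lemma proj_mul_self (S : Finset (AddChar α ℂ)) : proj S * proj S = proj S := by
  classical
  refine toLin'.injective (LinearMap.ext fun v => ?_)
  rw [toLin'_apply, toLin'_apply, ← mulVec_mulVec, proj_mulVec S v, proj_mulVec_sum_smul]

lemma proj_isHermitian (S : Finset (AddChar α ℂ)) : (proj S).IsHermitian := by
  ext i j
  simp [proj, ← map_neg_eq_conj]

lemma proj_apply_self (S : Finset (AddChar α ℂ)) (i : α) :
    proj S i i = ((#S / Fintype.card α : ℝ) : ℂ) := by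
  simp [proj, div_eq_inv_mul]

variable [DecidableEq α]

lemma proj_mul_diagonal_mul_proj_mulVec_coe {S : Finset (AddChar α ℂ)} {ψ : AddChar α ℂ}
    (hψ : ψ ∈ S) (d : α → ℂ) :
    (proj S * diagonal d * proj S) *ᵥ ⇑ψ = ∑ φ ∈ S, fourierCoeff d (φ - ψ) • ⇑φ := by
  have hd : diagonal d *ᵥ ⇑ψ = d * ⇑ψ := funext fun i => mulVec_diagonal d ψ i
  simp only [← mulVec_mulVec, proj_mulVec_coe hψ, hd, proj_mulVec, fourierCoeff_mul_coe]

lemma inv_card_le_norm_proj_mul_diagonal_mul_proj_sq {S : Finset (AddChar α ℂ)}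
    (hS : S - S = univ) {d : α → ℂ} (hd : ∀ j, ‖d j‖ = 1) :
    (#S : ℝ)⁻¹ ≤ ‖toEuclideanCLM (𝕜 := ℂ) (proj S * diagonal d * proj S)‖ ^ 2 := by
  have hN : (0 : ℝ) < Fintype.card α := by exact_mod_cast Fintype.card_pos
  have hparseval : ∑ ψ, ‖fourierCoeff d ψ‖ ^ 2 = 1 := by
    simp [sum_norm_fourierCoeff_sq, hd, hN.ne']
  obtain ⟨ψ, hψ, hψ_large⟩ := exists_mem_sum_sub_ge hS (fun φ => ‖fourierCoeff d φ‖ ^ 2)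
    (fun _ => sq_nonneg _)
  rw [hparseval] at hψ_large
  have hbound := sum_norm_mulVec_sq_le (proj S * diagonal d * proj S) ψ
  rw [proj_mul_diagonal_mul_proj_mulVec_coe hψ, sum_norm_sum_smul_sq] at hbound
  simp only [norm_apply, one_pow, sum_const, card_univ, nsmul_eq_mul, mul_one] at hbound
  have hS0 : (0 : ℝ) < #S := by exact_mod_cast card_pos.mpr ⟨ψ, hψ⟩
  rw [inv_le_iff_one_le_mul₀' hS0]
  calc 1 ≤ #S * ∑ φ ∈ S, ‖fourierCoeff d (φ - ψ)‖ ^ 2 := hψ_large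
    _ ≤ _ := by gcongr; exact le_of_mul_le_mul_left (hbound.trans_eq (mul_comm _ _)) hN

lemma const_mul_le_norm_proj_mul_diagonal_mul_proj {S : Finset (AddChar α ℂ)}
    (hS : S - S = univ) {C : ℝ} (hC : C ^ 2 * #S ^ 3 ≤ Fintype.card α ^ 2) {d : α → ℂ}
    (hd : ∀ j, ‖d j‖ = 1) :
    C * (#S / Fintype.card α) ≤ ‖toEuclideanCLM (𝕜 := ℂ) (proj S * diagonal d * proj S)‖ := by
  have hS0 : (0 : ℝ) < #S := by exact_mod_cast (nonempty_of_sub_eq_univ hS).card_pos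
  refine (le_abs_self _).trans (abs_le_of_sq_le_sq
    (le_trans ?_ (inv_card_le_norm_proj_mul_diagonal_mul_proj_sq hS hd)) (norm_nonneg _))
  calc (C * (#S / Fintype.card α)) ^ 2 = C ^ 2 * #S ^ 3 / Fintype.card α ^ 2 * (#S : ℝ)⁻¹ := by
        field_simp
    _ ≤ 1 * (#S : ℝ)⁻¹ := by gcongr; exact div_le_one_of_le₀ hC (sq_nonneg _)
    _ = (#S : ℝ)⁻¹ := one_mul _

section Axes

variable (H : Type*) [AddCommGroup H] [Fintype H]

noncomputable def axisChars : Finset (AddChar (H × H) ℂ) :=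
  univ.image (fun ψ : AddChar H ℂ => ψ.compAddMonoidHom (AddMonoidHom.fst H H)) ∪
    univ.image (fun ψ : AddChar H ℂ => ψ.compAddMonoidHom (AddMonoidHom.snd H H))

lemma card_axisChars_le : #(axisChars H) ≤ 2 * Fintype.card H := by
  refine (card_union_le _ _).trans ?_
  rw [two_mul]
  gcongr <;> exact card_image_le.trans (by simp)

lemma axisChars_sub_axisChars : axisChars H - axisChars H = univ := by
  refine eq_univ_of_forall fun χ => mem_sub.mpr ?_
  refine ⟨(χ.compAddMonoidHom (AddMonoidHom.inl H H)).compAddMonoidHom (AddMonoidHom.fst H H),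
    mem_union_left _ (mem_image_of_mem _ (mem_univ _)),
    (-χ.compAddMonoidHom (AddMonoidHom.inr H H)).compAddMonoidHom (AddMonoidHom.snd H H),
    mem_union_right _ (mem_image_of_mem _ (mem_univ _)), ?_⟩
  ext ⟨x, y⟩
  simp [sub_apply, ← map_add_eq_mul]

end Axes

end AddChar

lemma exists_fin_projection_of_fintype {α : Type*} [Fintype α] [DecidableEq α] [Nonempty α]
    {C δ : ℝ} (p : Matrix α α ℂ) (hp : p.IsHermitian) (hpp : p * p = p)
    (hdiag : ∀ i, (p i i).re = δ) (hδ : 0 < δ)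
    (hnorm : ∀ d : α → ℂ, (∀ j, ‖d j‖ = 1) →
      C * δ ≤ ‖toEuclideanCLM (𝕜 := ℂ) (p * diagonal d * p)‖) :
    ∃ (n : ℕ) (_ : 0 < n) (p : Matrix (Fin n) (Fin n) ℂ),
      p.IsHermitian ∧ p * p = p ∧
      ∃ δ : ℝ, IsGreatest (Set.range fun i : Fin n => (p i i).re) δ ∧ 0 < δ ∧
        ∀ s : Matrix (Fin n) (Fin n) ℂ, s.IsHermitian → s * s = 1 → s.IsDiag →
          ‖Matrix.toEuclideanCLM (𝕜 := ℂ) (p * s * p)‖ ≥ C * δ := by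
  let e := Fintype.equivFin α
  refine ⟨Fintype.card α, Fintype.card_pos, p.submatrix e.symm e.symm, hp.submatrix _,
    by rw [submatrix_mul_equiv, hpp], δ, ⟨⟨e (Classical.arbitrary α), by simp [hdiag]⟩, ?_⟩, hδ,
    fun s _ hs hsdiag => ?_⟩
  · rintro _ ⟨i, rfl⟩
    exact (hdiag _).le
  have hs' : s.submatrix e e * s.submatrix e e = 1 := by
    rw [submatrix_mul_equiv, hs, submatrix_one_equiv]
  have hsdiag' : (s.submatrix e e).IsDiag := hsdiag.submatrix e.injective
  have hpsp : p.submatrix e.symm e.symm * s * p.submatrix e.symm e.symm =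
      (p * diagonal (s.submatrix e e).diag * p).submatrix e.symm e.symm := by
    rw [hsdiag'.diagonal_diag, ← submatrix_mul_equiv (e₂ := e.symm),
      ← submatrix_mul_equiv (e₂ := e.symm), submatrix_submatrix]
    simp
  rw [hpsp, ge_iff_le, norm_toEuclideanCLM_submatrix_equiv]
  exact hnorm _ (hsdiag'.norm_apply_self_eq_one hs')

theorem exists_projection_psp_norm_ge_const_mul_delta_general (C : ℝ) :
    ∃ (n : ℕ) (_ : 0 < n) (p : Matrix (Fin n) (Fin n) ℂ),
      p.IsHermitian ∧ p * p = p ∧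
      ∃ δ : ℝ, IsGreatest (Set.range fun i : Fin n => (p i i).re) δ ∧ 0 < δ ∧
        ∀ s : Matrix (Fin n) (Fin n) ℂ, s.IsHermitian → s * s = 1 → s.IsDiag →
          ‖Matrix.toEuclideanCLM (𝕜 := ℂ) (p * s * p)‖ ≥ C * δ := by
  obtain ⟨m, hm⟩ := exists_nat_gt (8 * C ^ 2)
  let H := ZMod (m + 1)
  have hS := AddChar.axisChars_sub_axisChars H
  have hcard : (Fintype.card (H × H) : ℝ) = (m + 1) ^ 2 := by
    simp [H, Fintype.card_prod, sq]
  have hS_le : (#(AddChar.axisChars H) : ℝ) ≤ 2 * (m + 1) := by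
    exact_mod_cast (AddChar.card_axisChars_le H).trans_eq (by simp [H])
  have hC : C ^ 2 * #(AddChar.axisChars H) ^ 3 ≤ (Fintype.card (H × H) : ℝ) ^ 2 :=
    calc C ^ 2 * (#(AddChar.axisChars H) : ℝ) ^ 3 ≤ C ^ 2 * (2 * (m + 1 : ℝ)) ^ 3 := by gcongr
      _ = 8 * C ^ 2 * (m + 1 : ℝ) ^ 3 := by ring
      _ ≤ (m + 1) * (m + 1 : ℝ) ^ 3 := by gcongr; linarith
      _ = _ := by rw [hcard]; ring
  have hS0 := (nonempty_of_sub_eq_univ hS).card_pos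
  exact exists_fin_projection_of_fintype _ (AddChar.proj_isHermitian _) (AddChar.proj_mul_self _)
    (fun i => by rw [AddChar.proj_apply_self, Complex.ofReal_re]) (by positivity)
    (fun d hd => AddChar.const_mul_le_norm_proj_mul_diagonal_mul_proj hS hC hd)

/-- For every constant `C > 0` there are `n` and an orthogonal projection
`p ∈ Mₙ(ℂ)` with `δ_p > 0` such that every diagonal symmetry `s` satisfies
`‖psp‖ ≥ C · δ_p`, where `δ_p = max ⟨p eᵢ, eᵢ⟩` and `‖·‖` is the operator
norm on `ℂⁿ`. -/
theorem exists_projection_psp_norm_ge_const_mul_delta (C : ℝ) (hC : 0 < C) :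
    ∃ (n : ℕ) (_ : 0 < n) (p : Matrix (Fin n) (Fin n) ℂ),
      p.IsHermitian ∧ p * p = p ∧
      ∃ δ : ℝ, IsGreatest (Set.range fun i : Fin n => (p i i).re) δ ∧ 0 < δ ∧
        ∀ s : Matrix (Fin n) (Fin n) ℂ, s.IsHermitian → s * s = 1 → s.IsDiag →
          ‖Matrix.toEuclideanCLM (𝕜 := ℂ) (p * s * p)‖ ≥ C * δ :=
  exists_projection_psp_norm_ge_const_mul_delta_general C
end
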